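/- arXiv:0801.0289 — 7 statements merged into one kernel-verified Lean document; each statement's English description precedes it below -/
import Mathlib

section
/- Invariance theorem: there exists a partial computable function U : {0,1}* →. {0,1}* such that for every partial computable function A : {0,1}* →. {0,1}* there is a constant c with K_U(x) ≤ K_A(x) + c for all binary strings x. In other words, up to an additive constant, K_U is the smallest among the functions K_A. -/
open Nat.Partrec (Code)
open Nat.Partrec.Code

theorem primrec_listDrop : Primrec₂ (fun (l : List Bool) (n : ℕ) => l.drop n) := by
  have : Primrec₂ fun (l : List Bool) (n : ℕ) =>
      n.rec (motive := fun _ => List Bool) l fun _ ih => ih.tail :=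
    Primrec.nat_rec Primrec.id ((Primrec.list_tail.comp (Primrec.snd.comp Primrec.snd)).to₂)
  exact this.of_eq fun l n => by
    induction n with
    | zero => simp
    | succ n ih => simp only [ih]; exact List.tail_drop

/-- Parse a program for the universal machine: `1^n 0 p ↦ (n, p)`. -/
def uParse (q : List Bool) : Option (ℕ × List Bool) :=
  let n := q.idxOf false
  if n < q.length then some (n, q.drop (n + 1)) else none

theorem uParse_spec (n : ℕ) (p : List Bool) :
    uParse (List.replicate n true ++ false :: p) = some (n, p) := by
  have h1 : (List.replicate n true ++ false :: p).idxOf false = n := by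
    induction n with
    | zero => simp [List.idxOf_cons]
    | succ n ih => simpa [List.replicate_succ, List.idxOf_cons] using ih
  have h2 : n < (List.replicate n true ++ false :: p).length := by
    simp
  simp only [uParse, h1, if_pos h2]
  have : List.replicate n true ++ false :: p = (List.replicate n true ++ [false]) ++ p := by simp
  rw [this, List.drop_left' (by simp)]

theorem uParse_computable : Computable uParse := by
  have hidx : Computable fun q : List Bool => q.idxOf false :=
    (Primrec₂.comp Primrec.list_idxOf (Primrec.const false) Primrec.id).to_comp
  have hlen : Computable fun q : List Bool => q.length := Computable.list_length
  have hdrop : Computable fun q : List Bool => q.drop (q.idxOf false + 1) :=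
    (Primrec₂.comp primrec_listDrop Primrec.id (Primrec.succ.comp
      (Primrec₂.comp Primrec.list_idxOf (Primrec.const false) Primrec.id))).to_comp
  exact (Computable.cond
    ((Primrec₂.comp Primrec.nat_lt.decide
      (Primrec₂.comp Primrec.list_idxOf (Primrec.const false) Primrec.id) Primrec.list_length).to_comp)
    ((Computable.option_some).comp (Computable.pair hidx hdrop))
    (Computable.const none)).of_eq fun q => by
      simp only [uParse]
      by_cases h : q.idxOf false < q.length <;> simp [h]

/-- Kolmogorov complexity of the binary string `x` relative to the partial function
`A : {0,1}* →. {0,1}*`: the length of a shortest program `p` with `A p = x`,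
valued in `ℕ∞` (`= ⊤` when `x` is not in the range of `A`). -/
noncomputable def Kc (A : List Bool →. List Bool) (x : List Bool) : ℕ∞ :=
  sInf {n : ℕ∞ | ∃ p : List Bool, x ∈ A p ∧ (p.length : ℕ∞) = n}

def Umach : List Bool →. List Bool := fun q =>
  (Part.ofOption (uParse q)).bind fun np =>
    ((Denumerable.ofNat Code np.1).eval (Encodable.encode np.2)).bind fun m =>
      Part.ofOption (Encodable.decode (α := List Bool) m)

theorem Umach_partrec : Partrec Umach := by
  apply Partrec.bind (Computable.ofOption uParse_computable)
  apply Partrec.bind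
  · exact eval_part.comp
      ((Computable.ofNat Code).comp (Computable.fst.comp Computable.snd))
      (Computable.encode.comp (Computable.snd.comp Computable.snd))
  · exact Computable.ofOption (Computable.decode.comp Computable.snd)

/-- **Invariance theorem**: there is a partial computable `U` such that for every partial
computable `A` there is a constant `c` with `K_U(x) ≤ K_A(x) + c` for all binary strings `x`. -/
theorem invariance_theorem :
    ∃ U : List Bool →. List Bool, Partrec U ∧
      ∀ A : List Bool →. List Bool, Partrec A →
        ∃ c : ℕ, ∀ x : List Bool, Kc U x ≤ Kc A x + (c : ℕ∞) := by
  refine ⟨Umach, Umach_partrec, fun A hA => ?_⟩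
  obtain ⟨cA, hcA⟩ := exists_code.1 hA
  refine ⟨Encodable.encode cA + 1, fun x => ?_⟩
  -- key: for any program p of A producing x, Umach has a program of length |p| + e + 1
  have key : ∀ p : List Bool, x ∈ A p →
      Kc Umach x ≤ (p.length : ℕ∞) + (Encodable.encode cA + 1 : ℕ) := by
    intro p hp
    set q : List Bool := List.replicate (Encodable.encode cA) true ++ false :: p with hq
    have hxq : x ∈ Umach q := by
      simp only [Umach, hq, uParse_spec, Part.bind_eq_bind, Part.mem_bind_iff,
        Part.mem_ofOption, Option.mem_def, Option.some_inj]
      refine ⟨(Encodable.encode cA, p), rfl, Encodable.encode x, ?_, ?_⟩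
      · rw [Denumerable.ofNat_encode, hcA]
        simp only [Encodable.encodek]
        simpa [Part.bind_some] using Part.mem_map Encodable.encode hp
      · simp
    have hlq : (q.length : ℕ∞) = (p.length : ℕ∞) + (Encodable.encode cA + 1 : ℕ) := by
      simp [hq]
      ring
    exact sInf_le ⟨q, hxq, hlq⟩
  -- now take inf over programs of A
  by_cases hne : {n : ℕ∞ | ∃ p : List Bool, x ∈ A p ∧ (p.length : ℕ∞) = n}.Nonempty
  · obtain ⟨m, hm, hmin⟩ := (wellFounded_lt (α := ℕ∞)).has_min _ hne
    have hKA : Kc A x = m := le_antisymm (sInf_le hm)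
      (le_sInf fun n hn => not_lt.1 (hmin n hn))
    obtain ⟨p, hp, hpl⟩ := hm
    rw [hKA, ← hpl]
    exact key p hp
  · have : Kc A x = ⊤ := by
      rw [Kc, Set.not_nonempty_iff_eq_empty.1 hne, sInf_empty]
    simp [this]
end

section
/- If U : {0,1}* →. {0,1}* is an optimal partial computable function, then the Kolmogorov complexity function K_U : {0,1}* → ℕ is not computable. -/
/-- `U` is optimal if it is partial computable and `K_U` is smallest, up to an additive
constant, among the `K_A` for partial computable `A`. -/
def OptimalU (U : List Bool →. List Bool) : Prop :=
  Partrec U ∧ ∀ A : List Bool →. List Bool, Partrec A →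
    ∃ c : ℕ, ∀ x : List Bool, Kc U x ≤ Kc A x + (c : ℕ∞)

lemma Kc_le_of_mem {A : List Bool →. List Bool} {x p : List Bool} (h : x ∈ A p) :
    Kc A x ≤ (p.length : ℕ∞) :=
  sInf_le ⟨p, h, rfl⟩

/-- If `Kc A x ≤ m` then there is a program of length at most `m`. -/
lemma exists_program {A : List Bool →. List Bool} {x : List Bool} {m : ℕ}
    (h : Kc A x ≤ (m : ℕ∞)) : ∃ p : List Bool, x ∈ A p ∧ p.length ≤ m := by
  by_contra hc
  push_neg at hc
  have : ((m + 1 : ℕ) : ℕ∞) ≤ Kc A x := by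
    apply le_sInf
    rintro b ⟨p, hp, rfl⟩
    have := hc p hp
    exact_mod_cast this
  have := this.trans h
  exact_mod_cast Nat.not_succ_le_self m (by exact_mod_cast this)

lemma Kc_ne_top {U : List Bool →. List Bool} (hU : OptimalU U) (x : List Bool) :
    Kc U x ≠ ⊤ := by
  obtain ⟨c, hc⟩ := hU.2 (fun p => Part.some p) Computable.id.partrec
  have h1 : Kc (fun p => Part.some p) x ≤ (x.length : ℕ∞) :=
    Kc_le_of_mem (by simp [Part.mem_some_iff])
  have h2 : Kc U x ≤ ((x.length + c : ℕ) : ℕ∞) := by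
    push_cast
    exact (hc x).trans (add_le_add_left h1 _)
  exact (lt_of_le_of_lt h2 (ENat.coe_lt_top _)).ne

/-- `Kc U` is unbounded. -/
lemma Kc_unbounded {U : List Bool →. List Bool} (m : ℕ) :
    ∃ x : List Bool, (m : ℕ∞) ≤ Kc U x := by
  by_contra hc
  push_neg at hc
  have hall : ∀ x : List Bool, ∃ p : List Bool, x ∈ U p ∧ p.length ≤ m := fun x =>
    exists_program (le_of_lt (hc x))
  choose p hp hlen using hall
  have hinj : Function.Injective p := by
    intro a b hab
    have := hp a
    rw [hab] at this
    exact Part.mem_unique this (hp b)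
  have hfin : {l : List Bool | l.length ≤ m}.Finite := List.finite_length_le Bool m
  haveI : Finite ({l : List Bool | l.length ≤ m} : Set (List Bool)) := hfin
  have : Finite (List Bool) :=
    Finite.of_injective (fun x => (⟨p x, hlen x⟩ : {l : List Bool | l.length ≤ m}))
      (fun a b h => hinj (congrArg Subtype.val h))
  exact (not_finite (List Bool))

/-- If `U` is optimal, then the Kolmogorov complexity `K_U : {0,1}* → ℕ` is not computable.
(For optimal `U`, `K_U(x)` is finite for every `x`, so it is faithfully given by `toNat`.) -/
theorem K_not_computable (U : List Bool →. List Bool) (hU : OptimalU U) :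
    ¬ Computable fun x : List Bool => (Kc U x).toNat := by
  intro hf
  set f : List Bool → ℕ := fun x => (Kc U x).toNat with hfdef
  have hfK : ∀ x, (f x : ℕ∞) = Kc U x := fun x => ENat.coe_toNat (Kc_ne_top hU x)
  set d : ℕ → List Bool := fun n => (Encodable.decode (α := List Bool) n).getD [] with hddef
  set A : List Bool →. List Bool := fun p =>
    (Nat.rfind (fun n => Part.some
      (decide (2 * p.length + 1 ≤ f (d n))))).map d with hAdef
  have hd : Computable d :=
    Computable.option_getD Computable.decode (Computable.const [])
  have hlen2 : Computable fun p : List Bool => 2 * p.length + 1 :=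
    (Primrec.succ.comp ((Primrec.nat_mul).comp (Primrec.const 2)
      Primrec.list_length)).to_comp
  have hApc : Partrec A := by
    apply Partrec.map
    · apply Partrec.rfind
      apply Computable₂.partrec₂
      exact (Primrec.nat_le.decide.to_comp.comp (hlen2.comp Computable.fst)
        ((hf.comp hd).comp Computable.snd) : Computable _)
    · exact (hd.comp Computable.snd).to₂
  obtain ⟨c, hc⟩ := hU.2 A hApc
  set p : List Bool := List.replicate c false with hpdef
  have hplen : p.length = c := List.length_replicate
  have hex : ∃ k, true ∈ (fun n => Part.some
      (decide (2 * p.length + 1 ≤ f (d n)))) k := by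
    obtain ⟨x, hx⟩ := Kc_unbounded (U := U) (2 * p.length + 1)
    refine ⟨Encodable.encode x, ?_⟩
    simp only [Part.mem_some_iff, hddef, Encodable.encodek, Option.getD_some]
    rw [eq_comm, decide_eq_true_iff]
    have : ((2 * p.length + 1 : ℕ) : ℕ∞) ≤ (f x : ℕ∞) := by rw [hfK]; exact hx
    exact_mod_cast this
  have hdom : (Nat.rfind (fun n => Part.some
      (decide (2 * p.length + 1 ≤ f (d n))))).Dom := by
    refine Nat.rfind_dom.2 ?_
    obtain ⟨k, hk⟩ := hex
    exact ⟨k, hk, fun _ => trivial⟩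
  set k := (Nat.rfind _).get hdom with hkdef
  have hkmem : k ∈ Nat.rfind (fun n => Part.some
      (decide (2 * p.length + 1 ≤ f (d n)))) := Part.get_mem hdom
  have hspec := Nat.rfind_spec hkmem
  set x : List Bool := d k with hxdef
  have hxA : x ∈ A p := Part.mem_map _ hkmem
  have hfx : 2 * p.length + 1 ≤ f x := by
    simpa [Part.mem_some_iff, eq_comm, decide_eq_true_iff] using hspec
  have h1 : Kc U x ≤ (p.length : ℕ∞) + (c : ℕ∞) := (hc x).trans
    (add_le_add_left (Kc_le_of_mem hxA) _)
  have h2 : ((2 * p.length + 1 : ℕ) : ℕ∞) ≤ Kc U x := by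
    rw [← hfK x]; exact_mod_cast hfx
  have h3 := h2.trans h1
  rw [hplen] at h3
  have h4 : 2 * c + 1 ≤ c + c := by exact_mod_cast h3
  omega
end

section
/- There is a constant c such that for all binary strings x, y: K(x) ≤ K(x|y) + K(y) + 2·log₂(min(K(x|y), K(y))) + c. -/
/-- Conditional Kolmogorov complexity of `x` given `y` relative to
`B : {0,1}* × {0,1}* →. {0,1}*`. -/
noncomputable def KcCond (B : List Bool × List Bool →. List Bool) (x y : List Bool) : ℕ∞ :=
  sInf {n : ℕ∞ | ∃ p : List Bool, x ∈ B (p, y) ∧ (p.length : ℕ∞) = n}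

/-- `V` is optimal for conditional complexity. -/
def OptimalCond (V : List Bool × List Bool →. List Bool) : Prop :=
  Partrec V ∧ ∀ B : List Bool × List Bool →. List Bool, Partrec B →
    ∃ c : ℕ, ∀ x y : List Bool, KcCond V x y ≤ KcCond B x y + (c : ℕ∞)

namespace KProof

/-! ### Binary representation of natural numbers -/

def bitsToNat (l : List Bool) : ℕ := l.foldr (fun b n => 2 * n + cond b 1 0) 0

def natToBits : ℕ → List Bool
  | 0 => []
  | (n+1) => decide ((n+1) % 2 = 1) :: natToBits ((n+1) / 2)
  decreasing_by exact Nat.div_lt_self (Nat.succ_pos n) one_lt_two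

lemma bitsToNat_natToBits : ∀ n, bitsToNat (natToBits n) = n := by
  intro n
  induction n using Nat.strong_induction_on with
  | _ n ih =>
    match n with
    | 0 => rw [natToBits]; rfl
    | (m+1) =>
      rw [natToBits]
      have h := ih ((m+1)/2) (Nat.div_lt_self (Nat.succ_pos m) one_lt_two)
      simp only [bitsToNat, List.foldr] at h ⊢
      rw [h]
      rcases Nat.mod_two_eq_zero_or_one (m+1) with h2 | h2 <;>
        simp [h2] <;> omega

lemma natToBits_length : ∀ n, (natToBits n).length ≤ Nat.log 2 n + 1 := by
  intro n
  induction n using Nat.strong_induction_on with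
  | _ n ih =>
    match n with
    | 0 => rw [natToBits]; simp
    | 1 => rw [natToBits, natToBits]; simp
    | (m+2) =>
      rw [natToBits]
      have h := ih ((m+1+1)/2) (Nat.div_lt_self (Nat.succ_pos _) one_lt_two)
      have hlog : Nat.log 2 ((m+1+1)/2) = Nat.log 2 (m+1+1) - 1 := Nat.log_div_base 2 (m+1+1)
      have hpos : 0 < Nat.log 2 (m+1+1) := Nat.log_pos one_lt_two (by omega)
      have e : Nat.log 2 (m+1+1) = Nat.log 2 (m+2) := by norm_num
      simp only [List.length_cons]
      omega

/-! ### The decoder -/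

def leadStep (st : Bool × ℕ) (a : Bool) : Bool × ℕ :=
  cond (st.1 && a) (true, st.2 + 1) (false, st.2)

def splitStep (st : ℕ × List Bool × List Bool) (a : Bool) : ℕ × List Bool × List Bool :=
  if st.1 = 0 then (0, st.2.1, st.2.2 ++ [a]) else (st.1 - 1, st.2.1 ++ [a], st.2.2)

lemma foldl_leadStep_false : ∀ (w : List Bool) (n : ℕ),
    w.foldl leadStep (false, n) = (false, n) := by
  intro w; induction w with
  | nil => intro n; rfl
  | cons a w ih => intro n; simp [List.foldl, leadStep, ih]

lemma foldl_leadStep_spec : ∀ (L : ℕ) (n : ℕ) (w : List Bool),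
    (List.replicate L true ++ false :: w).foldl leadStep (true, n) = (false, n + L) := by
  intro L
  induction L with
  | zero => intro n w; simp [List.foldl, leadStep, foldl_leadStep_false]
  | succ L ih =>
    intro n w
    rw [List.replicate_succ, List.cons_append, List.foldl_cons]
    have h1 : leadStep (true, n) true = (true, n + 1) := rfl
    rw [h1, ih (n+1) w]
    ring_nf

lemma foldl_splitStep_spec : ∀ (l : List Bool) (k : ℕ) (a1 a2 : List Bool),
    l.foldl splitStep (k, a1, a2) = (k - l.length, a1 ++ l.take k, a2 ++ l.drop k) := by
  intro l
  induction l with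
  | nil => intro k a1 a2; simp
  | cons x l ih =>
    intro k a1 a2
    match k with
    | 0 => simp [List.foldl, splitStep, ih]
    | (k+1) => simp [List.foldl, splitStep, ih]

def parse (p : List Bool) : List Bool × List Bool :=
  let body := p.tail
  let m := (body.foldl leadStep (true, 0)).2
  let afterHdr := (body.foldl splitStep (m + 1, ([], []))).2.2
  let dgrest := (afterHdr.foldl splitStep (m, ([], []))).2
  let st := (dgrest.2.foldl splitStep (bitsToNat dgrest.1, ([], []))).2
  cond p.headI (st.1, st.2) (st.2, st.1)

lemma parse_spec (b : Bool) (dg s t : List Bool) (hk : bitsToNat dg = s.length) :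
    parse (b :: (List.replicate dg.length true ++ false :: (dg ++ (s ++ t)))) =
      cond b (s, t) (t, s) := by
  have hdrop1 : ∀ w : List Bool,
      (List.replicate dg.length true ++ false :: w).drop (dg.length + 1) = w := by
    intro w
    have : List.replicate dg.length true ++ false :: w
        = (List.replicate dg.length true ++ [false]) ++ w := by simp
    rw [this, List.drop_left' (by simp)]
  unfold parse
  simp only [List.tail_cons, List.headI, foldl_leadStep_spec, Nat.zero_add,
    foldl_splitStep_spec, List.nil_append, hdrop1,
    List.take_left' (rfl : dg.length = dg.length),
    List.drop_left' (rfl : dg.length = dg.length), hk,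
    List.take_left' (rfl : s.length = s.length),
    List.drop_left' (rfl : s.length = s.length)]

/-! ### The encoder -/

def encodePair (q r : List Bool) : List Bool :=
  let b := decide (q.length ≤ r.length)
  let s := cond b q r
  let t := cond b r q
  let dg := natToBits s.length
  b :: (List.replicate dg.length true ++ false :: (dg ++ (s ++ t)))

lemma parse_encodePair (q r : List Bool) : parse (encodePair q r) = (q, r) := by
  unfold encodePair
  by_cases h : q.length ≤ r.length
  · simpa [h] using parse_spec true (natToBits q.length) q r (bitsToNat_natToBits _)
  · simpa [h] using parse_spec false (natToBits r.length) r q (bitsToNat_natToBits _)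

lemma encodePair_length (q r : List Bool) :
    (encodePair q r).length =
      q.length + r.length + 2 * (natToBits (min q.length r.length)).length + 2 := by
  unfold encodePair
  by_cases h : q.length ≤ r.length
  · simp [h, min_eq_left h]; omega
  · have h' : min q.length r.length = r.length := min_eq_right (le_of_not_ge h)
    simp [h, h']; omega

/-! ### Computability of the decoder -/

lemma primrec_bitsToNat : Primrec bitsToNat := by
  have h : Primrec₂ (fun (_ : List Bool) (bn : Bool × ℕ) => 2 * bn.2 + cond bn.1 1 0) :=
    Primrec₂.comp₂ Primrec.nat_add
      (Primrec₂.comp₂ Primrec.nat_mul (Primrec₂.const 2)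
        (Primrec.snd.comp Primrec.snd).to₂)
      ((Primrec.cond (Primrec.fst.comp Primrec.snd) (Primrec.const 1) (Primrec.const 0)).to₂)
  exact Primrec.list_foldr Primrec.id (Primrec.const 0) h

lemma primrec_leadFold : Primrec (fun l : List Bool => (l.foldl leadStep (true, 0)).2) := by
  have hstep : Primrec₂ (fun (_ : List Bool) (sa : (Bool × ℕ) × Bool) => leadStep sa.1 sa.2) := by
    have hc : Primrec (fun sa : (Bool × ℕ) × Bool => sa.1.1 && sa.2) :=
      (Primrec.cond (Primrec.fst.comp Primrec.fst) Primrec.snd (Primrec.const false)).of_eq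
        (fun sa => by cases sa.1.1 <;> cases sa.2 <;> rfl)
    have h1 : Primrec (fun sa : (Bool × ℕ) × Bool => ((true : Bool), sa.1.2 + 1)) :=
      Primrec.pair (Primrec.const true)
        (Primrec.succ.comp (Primrec.snd.comp Primrec.fst))
    have h2 : Primrec (fun sa : (Bool × ℕ) × Bool => ((false : Bool), sa.1.2)) :=
      Primrec.pair (Primrec.const false) (Primrec.snd.comp Primrec.fst)
    exact ((Primrec.cond hc h1 h2).comp Primrec.snd).to₂
  exact Primrec.snd.comp (Primrec.list_foldl Primrec.id (Primrec.const (true, 0)) hstep)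

lemma primrec_splitFold :
    Primrec₂ (fun (k : ℕ) (l : List Bool) =>
      (l.foldl splitStep (k, ([], [])) : ℕ × List Bool × List Bool)) := by
  have hstep : Primrec₂ (fun (_ : ℕ × List Bool)
      (sa : (ℕ × List Bool × List Bool) × Bool) => splitStep sa.1 sa.2) := by
    have hc : PrimrecPred (fun sa : (ℕ × List Bool × List Bool) × Bool => sa.1.1 = 0) :=
      PrimrecRel.comp Primrec.eq (Primrec.fst.comp Primrec.fst) (Primrec.const 0)
    have hsing : Primrec (fun sa : (ℕ × List Bool × List Bool) × Bool => [sa.2]) :=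
      Primrec.list_cons.comp Primrec.snd (Primrec.const [])
    have h1 : Primrec (fun sa : (ℕ × List Bool × List Bool) × Bool =>
        ((0 : ℕ), sa.1.2.1, sa.1.2.2 ++ [sa.2])) :=
      Primrec.pair (Primrec.const 0)
        (Primrec.pair (Primrec.fst.comp (Primrec.snd.comp Primrec.fst))
          (Primrec.list_append.comp (Primrec.snd.comp (Primrec.snd.comp Primrec.fst)) hsing))
    have h2 : Primrec (fun sa : (ℕ × List Bool × List Bool) × Bool =>
        (sa.1.1 - 1, sa.1.2.1 ++ [sa.2], sa.1.2.2)) :=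
      Primrec.pair (Primrec.pred.comp (Primrec.fst.comp Primrec.fst))
        (Primrec.pair
          (Primrec.list_append.comp (Primrec.fst.comp (Primrec.snd.comp Primrec.fst)) hsing)
          (Primrec.snd.comp (Primrec.snd.comp Primrec.fst)))
    exact ((Primrec.ite hc h1 h2).comp Primrec.snd).to₂
  exact (Primrec.list_foldl (Primrec.snd : Primrec (fun kl : ℕ × List Bool => kl.2))
    (Primrec.pair Primrec.fst (Primrec.const (([], []) : List Bool × List Bool))) hstep).to₂

lemma primrec_parse : Primrec parse := by
  have htail : Primrec (fun p : List Bool => p.tail) := Primrec.list_tail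
  have hm : Primrec (fun p : List Bool => (p.tail.foldl leadStep (true, 0)).2) :=
    primrec_leadFold.comp htail
  have hafter : Primrec (fun p : List Bool =>
      (p.tail.foldl splitStep ((p.tail.foldl leadStep (true, 0)).2 + 1, ([], []))).2.2) :=
    Primrec.snd.comp (Primrec.snd.comp (primrec_splitFold.comp (Primrec.succ.comp hm) htail))
  have hdgrest : Primrec (fun p : List Bool =>
      ((((p.tail.foldl splitStep ((p.tail.foldl leadStep (true, 0)).2 + 1, ([], []))).2.2).foldl
        splitStep ((p.tail.foldl leadStep (true, 0)).2, ([], []))).2 : List Bool × List Bool)) :=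
    Primrec.snd.comp (primrec_splitFold.comp hm hafter)
  have hst : Primrec (fun p : List Bool =>
      ((((((p.tail.foldl splitStep ((p.tail.foldl leadStep (true, 0)).2 + 1, ([], []))).2.2).foldl
        splitStep ((p.tail.foldl leadStep (true, 0)).2, ([], []))).2).2.foldl
        splitStep (bitsToNat (((((p.tail.foldl splitStep ((p.tail.foldl leadStep (true, 0)).2 + 1,
          ([], []))).2.2).foldl splitStep ((p.tail.foldl leadStep (true, 0)).2, ([], []))).2).1),
          ([], []))).2 : List Bool × List Bool)) :=
    Primrec.snd.comp (primrec_splitFold.comp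
      (primrec_bitsToNat.comp (Primrec.fst.comp hdgrest)) (Primrec.snd.comp hdgrest))
  exact Primrec.cond Primrec.list_headI hst
    (Primrec.pair (Primrec.snd.comp hst) (Primrec.fst.comp hst))

/-! ### Basic facts about `Kc` -/

lemma Kc_le {A : List Bool →. List Bool} {x p : List Bool} (h : x ∈ A p) :
    Kc A x ≤ (p.length : ℕ∞) := sInf_le ⟨p, h, rfl⟩

lemma Kc_exists {A : List Bool →. List Bool} {x : List Bool} (h : ∃ p, x ∈ A p) :
    ∃ p, x ∈ A p ∧ Kc A x = (p.length : ℕ∞) := by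
  classical
  set S : Set ℕ := {m | ∃ p : List Bool, x ∈ A p ∧ p.length = m} with hS
  have hne : S.Nonempty := by
    obtain ⟨p, hp⟩ := h
    exact ⟨p.length, p, hp, rfl⟩
  obtain ⟨p, hp, hlen⟩ := Nat.sInf_mem hne
  refine ⟨p, hp, le_antisymm (Kc_le hp) ?_⟩
  refine le_sInf ?_
  rintro n ⟨p', hp', rfl⟩
  exact_mod_cast Nat.cast_le.2 (hlen ▸ Nat.sInf_le (⟨p', hp', rfl⟩ : p'.length ∈ S))

lemma Kc_ne_top_exists {A : List Bool →. List Bool} {x : List Bool} (h : Kc A x ≠ ⊤) :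
    ∃ p, x ∈ A p := by
  by_contra hc
  push_neg at hc
  have hempty : {n : ℕ∞ | ∃ p : List Bool, x ∈ A p ∧ (p.length : ℕ∞) = n} = ∅ := by
    ext n; simp only [Set.mem_setOf_eq, Set.mem_empty_iff_false, iff_false]
    rintro ⟨p, hp, -⟩; exact hc p hp
  exact h (by rw [Kc, hempty, sInf_empty])

lemma KcCond_eq_Kc (V : List Bool × List Bool →. List Bool) (x y : List Bool) :
    KcCond V x y = Kc (fun p => V (p, y)) x := rfl

end KProof

open KProof in
/-- There is a constant `c` such that for all `x, y`:
`K(x) ≤ K(x|y) + K(y) + 2·log₂(min(K(x|y), K(y))) + c`.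
(For optimal `U, V` all complexities are finite, so `toNat` gives their true values.) -/
theorem K_conditional_subadditivity (U : List Bool →. List Bool) (hU : OptimalU U)
    (V : List Bool × List Bool →. List Bool) (hV : OptimalCond V) :
    ∃ c : ℕ, ∀ x y : List Bool,
      Kc U x ≤ KcCond V x y + Kc U y +
        ((2 * Nat.log 2 (min ((KcCond V x y).toNat) ((Kc U y).toNat)) + c : ℕ) : ℕ∞) := by
  classical
  -- the combining machine
  set A : List Bool →. List Bool :=
    fun p => (U (parse p).2).bind (fun y => V ((parse p).1, y)) with hA_def
  have hA : Partrec A := by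
    have hparse := primrec_parse
    refine Partrec.bind (Partrec.comp hU.1 ((Primrec.snd.comp hparse).to_comp)) ?_
    exact (Partrec.comp hV.1
      (Computable.pair
        (((Primrec.fst.comp hparse).to_comp).comp Computable.fst) Computable.snd)).to₂
  obtain ⟨c₁, hc₁⟩ := hU.2 A hA
  -- finiteness of Kc U
  obtain ⟨c₂, hc₂⟩ := hU.2 (fun l => Part.some l)
    (Computable.id : Computable (fun l : List Bool => l))
  have hKU_ne_top : ∀ z : List Bool, Kc U z ≠ ⊤ := by
    intro z
    have h1 : Kc (fun l => Part.some l) z ≤ (z.length : ℕ∞) := Kc_le (Part.mem_some z)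
    have hle := (hc₂ z).trans (add_le_add_left h1 _)
    intro ht
    rw [ht, ← Nat.cast_add] at hle
    exact absurd (top_le_iff.1 hle) (ENat.coe_lt_top _).ne
  -- finiteness of KcCond V
  obtain ⟨c₃, hc₃⟩ := hV.2 (fun pr => Part.some pr.1)
    (Computable.fst : Computable (fun pr : List Bool × List Bool => pr.1))
  have hKV_ne_top : ∀ x y : List Bool, KcCond V x y ≠ ⊤ := by
    intro x y
    have h1 : KcCond (fun pr => Part.some pr.1) x y ≤ (x.length : ℕ∞) :=
      sInf_le ⟨x, Part.mem_some x, rfl⟩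
    have hle := (hc₃ x y).trans (add_le_add_left h1 _)
    intro ht
    rw [ht, ← Nat.cast_add] at hle
    exact absurd (top_le_iff.1 hle) (ENat.coe_lt_top _).ne
  refine ⟨c₁ + 4, fun x y => ?_⟩
  -- minimal programs
  obtain ⟨r, hr, hKr⟩ := Kc_exists (Kc_ne_top_exists (hKU_ne_top y))
  have hxV : ∃ q, x ∈ (fun p => V (p, y)) q :=
    Kc_ne_top_exists (A := fun p => V (p, y)) (by rw [← KcCond_eq_Kc]; exact hKV_ne_top x y)
  obtain ⟨q, hq, hKq⟩ := Kc_exists hxV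
  have hKq' : KcCond V x y = (q.length : ℕ∞) := by rw [KcCond_eq_Kc]; exact hKq
  -- x is produced by A on the combined program
  have hxA : x ∈ A (encodePair q r) := by
    rw [hA_def]
    simp only [parse_encodePair]
    exact Part.mem_bind_iff.2 ⟨y, hr, hq⟩
  -- length computation
  have hlen : (encodePair q r).length + c₁ ≤
      q.length + r.length + 2 * Nat.log 2 (min q.length r.length) + (c₁ + 4) := by
    have h1 := encodePair_length q r
    have h2 := natToBits_length (min q.length r.length)
    omega
  calc Kc U x ≤ Kc A x + (c₁ : ℕ∞) := hc₁ x
    _ ≤ ((encodePair q r).length : ℕ∞) + (c₁ : ℕ∞) := add_le_add_left (Kc_le hxA) _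
    _ = (((encodePair q r).length + c₁ : ℕ) : ℕ∞) := by push_cast; ring
    _ ≤ ((q.length + r.length + 2 * Nat.log 2 (min q.length r.length) + (c₁ + 4) : ℕ) : ℕ∞) :=
        Nat.cast_le.2 hlen
    _ = KcCond V x y + Kc U y +
        ((2 * Nat.log 2 (min ((KcCond V x y).toNat) ((Kc U y).toNat)) + (c₁ + 4) : ℕ) : ℕ∞) := by
        rw [hKq', hKr]
        simp only [ENat.toNat_coe]
        push_cast
        ring
end

section
/- There is no total computable function f : ℕ → {0,1}* such that K(f(n)) > n for all n ∈ ℕ. (This is the computability-theoretic core of Chaitin's incompleteness theorem: no effective procedure can produce strings of arbitrarily high guaranteed Kolmogorov complexity.) -/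
/-- There is no total computable function `f : ℕ → {0,1}*` with `K(f(n)) > n` for all `n`
(the computability-theoretic core of Chaitin's incompleteness theorem). -/
theorem no_computable_high_complexity (U : List Bool →. List Bool) (hU : OptimalU U) :
    ¬ ∃ f : ℕ → List Bool, Computable f ∧ ∀ n : ℕ, (n : ℕ∞) < Kc U (f n) := by
  rintro ⟨f, hf, hK⟩
  obtain ⟨hUp, hopt⟩ := hU
  set g : List Bool → List Bool := fun p => f (p.length * p.length) with hg
  have hgc : Computable g :=
    hf.comp
      ((Primrec.nat_mul.comp Primrec.list_length Primrec.list_length).to_comp)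
  have hA : Partrec (fun p => Part.some (g p) : List Bool →. List Bool) := hgc.partrec
  obtain ⟨c, hc⟩ := hopt _ hA
  set m := c + 2 with hm
  have hKA : Kc (fun p => Part.some (g p)) (f (m * m)) ≤ (m : ℕ∞) := by
    apply sInf_le
    exact ⟨List.replicate m false, by simp [g], by simp⟩
  have h1 := hK (m * m)
  have h2 := hc (f (m * m))
  have h3 : ((m * m : ℕ) : ℕ∞) < ((m + c : ℕ) : ℕ∞) := by
    push_cast
    exact lt_of_lt_of_le h1 (h2.trans (add_le_add_left hKA _))
  have h4 : m * m < m + c := by exact_mod_cast h3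
  nlinarith
end

section
/- Invariance theorem for prefix complexity: there exists a prefix partial computable function U^pref : {0,1}* →. {0,1}* such that for every prefix partial computable function A : {0,1}* →. {0,1}* there is a constant c with K_{U^pref}(x) ≤ K_A(x) + c for all binary strings x. -/
/-- A set of binary strings is prefix-free if no element is a proper prefix of another. -/
def PrefixFreeSet (S : Set (List Bool)) : Prop :=
  ∀ p ∈ S, ∀ q ∈ S, p <+: q → p = q

/-- A partial function is prefix if its domain is prefix-free. -/
def IsPrefixFn (A : List Bool →. List Bool) : Prop :=
  PrefixFreeSet {p : List Bool | (A p).Dom}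

namespace PrefInv

open Encodable Denumerable Nat.Partrec Nat.Partrec.Code

/-- Boolean test for `l <+: q`. -/
def isPre (l q : List Bool) : Bool :=
  decide ((List.range l.length).map (fun i => q[i]?) = l.map some)

theorem isPre_iff {l q : List Bool} : isPre l q = true ↔ l <+: q := by
  rw [isPre, decide_eq_true_iff]
  induction l generalizing q with
  | nil => simp
  | cons a l ih =>
    cases q with
    | nil =>
      simp [List.range_succ_eq_map, List.map_map]
    | cons b q =>
      simp only [List.length_cons]
      rw [List.range_succ_eq_map]
      have hmap : List.map ((fun i => (b :: q)[i]?) ∘ Nat.succ) (List.range l.length)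
          = List.map (fun i => q[i]?) (List.range l.length) := by
        apply List.map_congr_left
        intro i _
        simp
      simp only [List.map_cons, List.map_map, hmap, List.getElem?_cons_zero,
        List.cons.injEq, Option.some.injEq, List.cons_prefix_cons, ih]
      exact and_congr eq_comm Iff.rfl

/-- `halt c n t` : does the `t`-step approximation of code `c` halt on input `n`? -/
def halt (c : Code) (n t : ℕ) : Bool := (evaln t c n).isSome

theorem halt_mono {c n} {t t'} (h : t ≤ t') (hh : halt c n t = true) : halt c n t' = true := by
  rw [halt, Option.isSome_iff_exists] at *
  obtain ⟨v, hv⟩ := hh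
  exact ⟨v, evaln_mono h hv⟩

theorem halt_bound {c n t} (hh : halt c n t = true) : n < t := by
  rw [halt, Option.isSome_iff_exists] at hh
  obtain ⟨v, hv⟩ := hh
  exact evaln_bound hv

/-- `check c n t m` : string coded by `m` "blocks" the string coded by `n` (halting
time `t`), i.e. it is a distinct comparable string that was enumerated strictly earlier
(lexicographically in (time, code)). -/
def check (c : Code) (n t m : ℕ) : Bool :=
  (Option.bind (decode₂ (List Bool) m) fun l =>
    (decode₂ (List Bool) n).map fun q =>
      (!(decide (m = n))) && (isPre l q || isPre q l) &&
        ((halt c m t && decide (m < n)) || halt c m (t - 1))).getD false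

/-- `blocked c n t` : some `m < t` blocks `n`. -/
def blocked (c : Code) (n t : ℕ) : Bool :=
  Nat.rec false (fun m ih => ih || check c n t m) t

theorem blocked_iff {c n t} : blocked c n t = true ↔ ∃ m < t, check c n t m = true := by
  suffices H : ∀ k, (Nat.rec false (fun m ih => ih || check c n t m) k : Bool) = true ↔
      ∃ m < k, check c n t m = true from H t
  intro k
  induction k with
  | zero => simp
  | succ k ih =>
    simp only [Bool.or_eq_true, ih]
    constructor
    · rintro (⟨m, hm, h⟩ | h)
      · exact ⟨m, Nat.lt_succ_of_lt hm, h⟩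
      · exact ⟨k, Nat.lt_succ_self k, h⟩
    · rintro ⟨m, hm, h⟩
      rcases Nat.lt_succ_iff_lt_or_eq.mp hm with hm | rfl
      · exact Or.inl ⟨m, hm, h⟩
      · exact Or.inr h

/-- The "prefix-ified" run of code `c` on input `n`. -/
def run (c : Code) (n : ℕ) : Part ℕ :=
  (Nat.rfind fun t => Part.some (halt c n t)).bind fun t =>
    Part.ofOption (cond (blocked c n t) Option.none (evaln t c n))

theorem run_spec {c n k} (h : k ∈ run c n) :
    ∃ t, halt c n t = true ∧ (∀ t' < t, halt c n t' = false) ∧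
      blocked c n t = false ∧ evaln t c n = some k := by
  rw [run, Part.mem_bind_iff] at h
  obtain ⟨t, ht, hk⟩ := h
  have h1 : halt c n t = true := by simpa using Nat.rfind_spec ht
  have h2 : ∀ t' < t, halt c n t' = false := fun t' h' => by
    simpa using Nat.rfind_min ht h'
  rw [Part.mem_ofOption] at hk
  cases hb : blocked c n t with
  | true => rw [hb] at hk; simp at hk
  | false => rw [hb] at hk; exact ⟨t, h1, h2, hb, hk⟩

theorem run_dom_spec {c n} (h : (run c n).Dom) :
    ∃ t, halt c n t = true ∧ (∀ t' < t, halt c n t' = false) ∧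
      blocked c n t = false := by
  obtain ⟨k, hk⟩ := Part.dom_iff_mem.mp h
  obtain ⟨t, h1, h2, h3, _⟩ := run_spec hk
  exact ⟨t, h1, h2, h3⟩

/-- The domains of `run c` on canonical codes form a prefix-free set of strings. -/
theorem run_prefixFree (c : Code) {q q' : List Bool}
    (h : (run c (encode q)).Dom) (h' : (run c (encode q')).Dom) (hpre : q <+: q') :
    q = q' := by
  by_contra hne
  obtain ⟨t, h1, h2, h3⟩ := run_dom_spec h
  obtain ⟨t', h1', h2', h3'⟩ := run_dom_spec h'
  have hnn : encode q ≠ encode q' := fun e => hne (encode_injective e)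
  -- whichever halts first (lexicographically) blocks the other
  have key : ∀ (a b : List Bool) (ta tb : ℕ), a ≠ b → (isPre a b || isPre b a) = true →
      halt c (encode a) ta = true → blocked c (encode b) tb = false →
      (ta < tb ∨ (ta = tb ∧ encode a < encode b)) → False := by
    intro a b ta tb hab hcomp hha hbb hlex
    have hma : encode a < ta := halt_bound hha
    have hmt : encode a < tb := by
      rcases hlex with h | ⟨rfl, _⟩
      · exact hma.trans h
      · exact hma
    have : check c (encode b) tb (encode a) = true := by
      rw [check]
      rw [show decode₂ (List Bool) (encode a) = some a from decode₂_encode _]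
      rw [show decode₂ (List Bool) (encode b) = some b from decode₂_encode _]
      simp only [Option.bind_some, Option.map_some, Option.getD_some]
      have hne' : (!decide (encode a = encode b)) = true := by
        have : encode a ≠ encode b := fun e => hab (encode_injective e)
        simp [this]
      rw [hne', hcomp]
      simp only [Bool.true_and]
      rcases hlex with hlt | ⟨rfl, hmn⟩
      · have : halt c (encode a) (tb - 1) = true :=
          halt_mono (Nat.le_sub_one_of_lt hlt) hha
        rw [this]; simp
      · rw [hha]
        simp [hmn]
    have hnb : ¬ ∃ m < tb, check c (encode b) tb m = true := by
      rw [← blocked_iff, hbb]; simp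
    exact hnb ⟨encode a, hmt, this⟩
  have hcomp : (isPre q q' || isPre q' q) = true := by
    simp [isPre_iff.mpr hpre]
  have hcomp' : (isPre q' q || isPre q q') = true := by
    simp [isPre_iff.mpr hpre]
  rcases lt_trichotomy t t' with hlt | rfl | hlt
  · exact key q q' t t' hne hcomp h1 h3' (Or.inl hlt)
  · rcases Nat.lt_or_ge (encode q) (encode q') with hmn | hmn
    · exact key q q' t t hne hcomp h1 h3' (Or.inr ⟨rfl, hmn⟩)
    · have : encode q' < encode q := lt_of_le_of_ne hmn (Ne.symm hnn)
      exact key q' q t t (Ne.symm hne) hcomp' h1' h3 (Or.inr ⟨rfl, this⟩)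
  · exact key q' q t' t (Ne.symm hne) hcomp' h1' h3 (Or.inl hlt)

/-- Parse `1^e 0 p` into `(e, p)`. -/
def parse : List Bool → Option (ℕ × List Bool) := fun s =>
  List.rec Option.none (fun b s' ih => cond b (ih.map fun ep => (ep.1 + 1, ep.2)) (some (0, s'))) s

@[simp] theorem parse_nil : parse [] = Option.none := rfl

@[simp] theorem parse_cons (b : Bool) (s : List Bool) :
    parse (b :: s) = cond b ((parse s).map fun ep => (ep.1 + 1, ep.2)) (some (0, s)) := rfl

theorem parse_replicate (e : ℕ) (p : List Bool) :
    parse (List.replicate e true ++ false :: p) = some (e, p) := by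
  induction e with
  | zero => simp
  | succ e ih => simp [List.replicate_succ, ih]

theorem parse_eq_some {s : List Bool} {e : ℕ} {p : List Bool}
    (h : parse s = some (e, p)) : s = List.replicate e true ++ false :: p := by
  induction s generalizing e with
  | nil => simp at h
  | cons b s ih =>
    cases b with
    | false =>
      simp only [parse_cons, cond_false, Option.some.injEq, Prod.mk.injEq] at h
      rw [← h.1, ← h.2]
      simp
    | true =>
      simp only [parse_cons, cond_true, Option.map_eq_some_iff] at h
      obtain ⟨⟨e₀, p₀⟩, h₀, h₁⟩ := h
      injection h₁ with h2 h3
      subst h2; subst h3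
      rw [List.replicate_succ]
      simpa using ih h₀

theorem replicate_prefix {e e' : ℕ} {p p' : List Bool}
    (h : List.replicate e true ++ false :: p <+: List.replicate e' true ++ false :: p') :
    e = e' ∧ p <+: p' := by
  induction e generalizing e' with
  | zero =>
    cases e' with
    | zero => simpa [List.cons_prefix_cons] using h
    | succ e' =>
      rw [List.replicate_succ] at h
      simp [List.cons_prefix_cons] at h
  | succ e ih =>
    cases e' with
    | zero =>
      rw [List.replicate_succ] at h
      simp [List.cons_prefix_cons] at h
    | succ e' =>
      rw [List.replicate_succ, List.replicate_succ] at h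
      simp only [List.cons_append, List.cons_prefix_cons, true_and] at h
      obtain ⟨he, hp⟩ := ih h
      exact ⟨by omega, hp⟩

/-- The universal prefix machine. -/
def U : List Bool →. List Bool := fun s =>
  (Part.ofOption (parse s)).bind fun ep =>
    (run (Denumerable.ofNat Code ep.1) (encode ep.2)).bind fun k =>
      Part.ofOption (decode₂ (List Bool) k)

theorem U_dom {s : List Bool} (h : (U s).Dom) :
    ∃ e p, parse s = some (e, p) ∧ (run (Denumerable.ofNat Code e) (encode p)).Dom := by
  obtain ⟨x, hx⟩ := Part.dom_iff_mem.mp h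
  rw [U, Part.mem_bind_iff] at hx
  obtain ⟨ep, hep, hx⟩ := hx
  rw [Part.mem_ofOption] at hep
  rw [Part.mem_bind_iff] at hx
  obtain ⟨k, hk, _⟩ := hx
  exact ⟨ep.1, ep.2, hep, Part.dom_iff_mem.mpr ⟨k, hk⟩⟩

theorem U_prefixFn : IsPrefixFn U := by
  intro s hs s' hs' hpre
  obtain ⟨e, p, hparse, hdom⟩ := U_dom hs
  obtain ⟨e', p', hparse', hdom'⟩ := U_dom hs'
  rw [parse_eq_some hparse, parse_eq_some hparse'] at hpre ⊢
  obtain ⟨he, hp⟩ := replicate_prefix hpre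
  subst he
  rw [run_prefixFree _ hdom (by exact hdom') hp]

theorem U_mem {e : ℕ} {p x : List Bool}
    (h : encode x ∈ run (Denumerable.ofNat Code e) (encode p)) :
    x ∈ U (List.replicate e true ++ false :: p) := by
  rw [U, Part.mem_bind_iff]
  refine ⟨(e, p), ?_, ?_⟩
  · rw [Part.mem_ofOption, parse_replicate]; rfl
  · rw [Part.mem_bind_iff]
    exact ⟨encode x, h, by rw [Part.mem_ofOption]; exact decode₂_encode x⟩

theorem run_correct {A : List Bool →. List Bool} (hA : IsPrefixFn A) {c : Code}
    (hc : eval c = fun n => Part.bind (decode (α := List Bool) n) fun a => (A a).map encode)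
    {p x : List Bool} (h : x ∈ A p) : encode x ∈ run c (encode p) := by
  have hev : encode x ∈ eval c (encode p) := by
    rw [hc]
    simp only [encodek, Part.coe_some, Part.bind_eq_bind, Part.mem_bind_iff, Part.mem_some_iff,
      Part.mem_map_iff]
    exact ⟨p, rfl, x, h, rfl⟩
  obtain ⟨k0, hk0⟩ := evaln_complete.mp hev
  have hhalt : halt c (encode p) k0 = true := by
    rw [halt, Option.isSome_iff_exists]; exact ⟨_, hk0⟩
  obtain ⟨t, ht, -⟩ := Nat.rfind_min' (p := fun t => halt c (encode p) t) hhalt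
  have hts : halt c (encode p) t = true := by simpa using Nat.rfind_spec ht
  -- any halting canonical code whose string is comparable with `p` must be `encode p` itself
  have hblock : blocked c (encode p) t = false := by
    rw [← Bool.not_eq_true, blocked_iff]
    rintro ⟨m, hm, hch⟩
    rw [check] at hch
    cases hd : decode₂ (List Bool) m with
    | none => rw [hd] at hch; simp at hch
    | some l =>
      rw [hd, decode₂_encode] at hch
      simp only [Option.bind_some, Option.map_some, Option.getD_some, Bool.and_eq_true,
        Bool.or_eq_true, Bool.not_eq_true', decide_eq_false_iff_not] at hch
      obtain ⟨⟨hmn, hcomp⟩, hhalts⟩ := hch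
      -- `l` is in the domain of `A`
      have hldom : (A l).Dom := by
        have hmhalt : ∃ t0, halt c m t0 = true := by
          rcases hhalts with ⟨h', _⟩ | h'
          · exact ⟨t, h'⟩
          · exact ⟨t - 1, h'⟩
        obtain ⟨t0, ht0⟩ := hmhalt
        rw [halt, Option.isSome_iff_exists] at ht0
        obtain ⟨v, hv⟩ := ht0
        have := evaln_sound hv
        rw [hc] at this
        have hdm : l ∈ decode (α := List Bool) m := Encodable.mem_decode₂'.mp hd |>.1
        have hem : encode l = m := Encodable.mem_decode₂.mp hd
        obtain ⟨a, ha, v', hv', _⟩ := by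
          simpa only [Part.mem_bind_iff, Part.mem_coe, Part.mem_map_iff] using this
        have : a = l := by
          have := Option.mem_unique ha hdm
          exact this
        subst this
        exact Part.dom_iff_mem.mpr ⟨v', hv'⟩
      have hpdom : (A p).Dom := Part.dom_iff_mem.mpr ⟨x, h⟩
      have hlp : l = p := by
        rcases hcomp with hc1 | hc1
        · exact hA l hldom p hpdom (isPre_iff.mp hc1)
        · exact (hA p hpdom l hldom (isPre_iff.mp hc1)).symm
      exact hmn (by rw [← hlp, Encodable.mem_decode₂.mp hd])
  -- now run halts with the correct value
  rw [run, Part.mem_bind_iff]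
  refine ⟨t, ht, ?_⟩
  rw [hblock, Part.mem_ofOption]
  simp only [cond_false]
  rw [halt, Option.isSome_iff_exists] at hts
  obtain ⟨v, hv⟩ := hts
  have hveq : v = encode x := Part.mem_unique (evaln_sound hv) hev
  rw [← hveq]
  exact hv

theorem isPre_primrec : Primrec₂ isPre := by
  have h1 : Primrec fun p : List Bool × List Bool => (List.range p.1.length).map fun i => p.2[i]? :=
    Primrec.of_eq
      (Primrec.list_map (Primrec.list_range.comp (Primrec.list_length.comp Primrec.fst))
        ((Primrec.list_getElem?.comp (Primrec.snd.comp Primrec.fst) Primrec.snd).to₂))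
      fun _ => rfl
  have h2 : Primrec fun p : List Bool × List Bool => p.1.map some :=
    Primrec.of_eq (Primrec.list_map Primrec.fst ((Primrec.option_some.comp Primrec.snd).to₂))
      fun _ => rfl
  exact (Primrec.of_eq (Primrec.eq.comp h1 h2).decide fun _ => rfl).to₂

theorem halt_primrec : Primrec fun a : (Code × ℕ) × ℕ => halt a.1.1 a.1.2 a.2 :=
  Primrec.of_eq
    (Primrec.option_isSome.comp (primrec_evaln.comp
      ((Primrec.snd.pair (Primrec.fst.comp Primrec.fst)).pair (Primrec.snd.comp Primrec.fst))))
    fun _ => rfl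

theorem check_primrec :
    Primrec fun a : ((Code × ℕ) × ℕ) × ℕ => check a.1.1.1 a.1.1.2 a.1.2 a.2 := by
  have hand : Primrec₂ (· && ·) := Primrec.dom_bool₂ _
  have hor : Primrec₂ (· || ·) := Primrec.dom_bool₂ _
  have hc : Primrec fun y : ((((Code × ℕ) × ℕ) × ℕ) × List Bool) × List Bool => y.1.1.1.1.1 :=
    Primrec.of_eq
      (Primrec.fst.comp (Primrec.fst.comp (Primrec.fst.comp (Primrec.fst.comp Primrec.fst))))
      fun _ => rfl
  have hn : Primrec fun y : ((((Code × ℕ) × ℕ) × ℕ) × List Bool) × List Bool => y.1.1.1.1.2 :=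
    Primrec.of_eq
      (Primrec.snd.comp (Primrec.fst.comp (Primrec.fst.comp (Primrec.fst.comp Primrec.fst))))
      fun _ => rfl
  have ht : Primrec fun y : ((((Code × ℕ) × ℕ) × ℕ) × List Bool) × List Bool => y.1.1.1.2 :=
    Primrec.of_eq (Primrec.snd.comp (Primrec.fst.comp (Primrec.fst.comp Primrec.fst)))
      fun _ => rfl
  have hm : Primrec fun y : ((((Code × ℕ) × ℕ) × ℕ) × List Bool) × List Bool => y.1.1.2 :=
    Primrec.of_eq (Primrec.snd.comp (Primrec.fst.comp Primrec.fst)) fun _ => rfl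
  have hl : Primrec fun y : ((((Code × ℕ) × ℕ) × ℕ) × List Bool) × List Bool => y.1.2 :=
    Primrec.of_eq (Primrec.snd.comp Primrec.fst) fun _ => rfl
  have hq : Primrec fun y : ((((Code × ℕ) × ℕ) × ℕ) × List Bool) × List Bool => y.2 :=
    Primrec.snd
  have b1 : Primrec fun y : ((((Code × ℕ) × ℕ) × ℕ) × List Bool) × List Bool =>
      !decide (y.1.1.2 = y.1.1.1.1.2) :=
    Primrec.of_eq ((Primrec.dom_bool Bool.not).comp (Primrec.eq.comp hm hn).decide) fun _ => rfl
  have b2 : Primrec fun y : ((((Code × ℕ) × ℕ) × ℕ) × List Bool) × List Bool =>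
      (isPre y.1.2 y.2 || isPre y.2 y.1.2) :=
    Primrec.of_eq (hor.comp (isPre_primrec.comp hl hq) (isPre_primrec.comp hq hl)) fun _ => rfl
  have b3 : Primrec fun y : ((((Code × ℕ) × ℕ) × ℕ) × List Bool) × List Bool =>
      (halt y.1.1.1.1.1 y.1.1.2 y.1.1.1.2 && decide (y.1.1.2 < y.1.1.1.1.2)) :=
    Primrec.of_eq
      (hand.comp (halt_primrec.comp ((hc.pair hm).pair ht)) (Primrec.nat_lt.comp hm hn).decide)
      fun _ => rfl
  have b4 : Primrec fun y : ((((Code × ℕ) × ℕ) × ℕ) × List Bool) × List Bool =>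
      halt y.1.1.1.1.1 y.1.1.2 (y.1.1.1.2 - 1) :=
    Primrec.of_eq (halt_primrec.comp ((hc.pair hm).pair (Primrec.pred.comp ht))) fun _ => rfl
  have hbody : Primrec fun y : ((((Code × ℕ) × ℕ) × ℕ) × List Bool) × List Bool =>
      ((!decide (y.1.1.2 = y.1.1.1.1.2)) && (isPre y.1.2 y.2 || isPre y.2 y.1.2) &&
        ((halt y.1.1.1.1.1 y.1.1.2 y.1.1.1.2 && decide (y.1.1.2 < y.1.1.1.1.2)) ||
          halt y.1.1.1.1.1 y.1.1.2 (y.1.1.1.2 - 1))) :=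
    Primrec.of_eq (hand.comp (hand.comp b1 b2) (hor.comp b3 b4)) fun _ => rfl
  have hinner : Primrec fun a : ((Code × ℕ) × ℕ) × ℕ =>
      (Option.bind (decode₂ (List Bool) a.2) fun l =>
        (decode₂ (List Bool) a.1.1.2).map fun q =>
          (!decide (a.2 = a.1.1.2)) && (isPre l q || isPre q l) &&
            ((halt a.1.1.1 a.2 a.1.2 && decide (a.2 < a.1.1.2)) ||
              halt a.1.1.1 a.2 (a.1.2 - 1))) :=
    Primrec.of_eq
      (Primrec.option_bind (Primrec.decode₂.comp Primrec.snd)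
        ((Primrec.of_eq
          (Primrec.option_map
            (Primrec.decode₂.comp
              (Primrec.snd.comp (Primrec.fst.comp (Primrec.fst.comp Primrec.fst))))
            hbody.to₂)
          fun _ => rfl).to₂))
      fun _ => rfl
  exact Primrec.of_eq (Primrec.option_getD.comp hinner (Primrec.const false)) fun _ => rfl

theorem blocked_primrec :
    Primrec fun a : (Code × ℕ) × ℕ => blocked a.1.1 a.1.2 a.2 := by
  have hor : Primrec₂ (· || ·) := Primrec.dom_bool₂ _
  have h : Primrec₂ fun (a : (Code × ℕ) × ℕ) (p : ℕ × Bool) =>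
      (p.2 || check a.1.1 a.1.2 a.2 p.1) :=
    (Primrec.of_eq
      (hor.comp (Primrec.snd.comp Primrec.snd)
        (check_primrec.comp (Primrec.fst.pair (Primrec.fst.comp Primrec.snd))))
      fun _ => rfl).to₂
  exact Primrec.of_eq (Primrec.nat_rec' Primrec.snd (Primrec.const false) h) fun _ => rfl

theorem run_partrec : Partrec fun a : Code × ℕ => run a.1 a.2 := by
  have hhc : Computable₂ fun (a : Code × ℕ) (t : ℕ) => halt a.1 a.2 t :=
    (Computable.of_eq halt_primrec.to_comp fun _ => rfl : Computable _)
  have h1 : Partrec fun a : Code × ℕ => Nat.rfind fun t => Part.some (halt a.1 a.2 t) :=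
    Partrec.of_eq (Partrec.rfind hhc.partrec₂) fun _ => rfl
  have hev : Primrec fun x : (Code × ℕ) × ℕ => evaln x.2 x.1.1 x.1.2 :=
    Primrec.of_eq
      (primrec_evaln.comp ((Primrec.snd.pair (Primrec.fst.comp Primrec.fst)).pair
        (Primrec.snd.comp Primrec.fst)))
      fun _ => rfl
  have h2 : Computable fun x : (Code × ℕ) × ℕ =>
      (cond (blocked x.1.1 x.1.2 x.2) Option.none (evaln x.2 x.1.1 x.1.2) : Option ℕ) :=
    (Primrec.of_eq (Primrec.cond blocked_primrec (Primrec.const Option.none) hev)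
      fun _ => rfl).to_comp
  exact Partrec.of_eq (h1.bind ((Computable.ofOption h2).to₂)) fun _ => rfl

theorem parse_primrec : Primrec parse := by
  have h : Primrec₂ fun (s : List Bool) (x : Bool × List Bool × Option (ℕ × List Bool)) =>
      cond x.1 (x.2.2.map fun ep => (ep.1 + 1, ep.2)) (some (0, x.2.1)) :=
    (Primrec.of_eq
      (Primrec.cond (Primrec.fst.comp Primrec.snd)
        (Primrec.option_map (Primrec.snd.comp (Primrec.snd.comp Primrec.snd))
          ((Primrec.pair (Primrec.succ.comp (Primrec.fst.comp Primrec.snd))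
            (Primrec.snd.comp Primrec.snd)).to₂))
        (Primrec.option_some.comp ((Primrec.const 0).pair
          (Primrec.fst.comp (Primrec.snd.comp Primrec.snd)))))
      fun _ => rfl).to₂
  exact Primrec.of_eq (Primrec.list_rec Primrec.id (Primrec.const Option.none) h) fun _ => rfl

theorem U_partrec : Partrec U := by
  have hofn : Computable (Denumerable.ofNat Code) := (Primrec.ofNat Code).to_comp
  have h0 : Partrec fun s : List Bool => (Part.ofOption (parse s)) :=
    Computable.ofOption parse_primrec.to_comp
  have hr : Partrec fun x : List Bool × (ℕ × List Bool) =>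
      run (Denumerable.ofNat Code x.2.1) (encode x.2.2) :=
    Partrec.of_eq
      (run_partrec.comp (Computable.pair (hofn.comp (Computable.fst.comp Computable.snd))
        (Computable.encode.comp (Computable.snd.comp Computable.snd))))
      fun _ => rfl
  have hd : Partrec₂ fun (x : List Bool × (ℕ × List Bool)) (k : ℕ) =>
      (Part.ofOption (decode₂ (List Bool) k)) :=
    (Partrec.of_eq (Computable.ofOption (Primrec.decode₂.to_comp.comp Computable.snd))
      fun _ => rfl).to₂
  exact Partrec.of_eq (h0.bind ((hr.bind hd).to₂)) fun _ => rfl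

end PrefInv

/-- **Invariance theorem for prefix complexity**: there exists a prefix partial computable
`U` such that for every prefix partial computable `A` there is a constant `c` with
`K_U(x) ≤ K_A(x) + c` for all binary strings `x`. -/
theorem prefix_invariance_theorem :
    ∃ U : List Bool →. List Bool, Partrec U ∧ IsPrefixFn U ∧
      ∀ A : List Bool →. List Bool, Partrec A → IsPrefixFn A →
        ∃ c : ℕ, ∀ x : List Bool, Kc U x ≤ Kc A x + (c : ℕ∞) := by
  refine ⟨PrefInv.U, PrefInv.U_partrec, PrefInv.U_prefixFn, ?_⟩
  intro A hA hApre
  obtain ⟨c, hc⟩ := Nat.Partrec.Code.exists_code.mp hA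
  refine ⟨Encodable.encode c + 1, fun x => ?_⟩
  by_cases hS : {n : ℕ∞ | ∃ p, x ∈ A p ∧ (p.length : ℕ∞) = n}.Nonempty
  · obtain ⟨p, hp, hlen⟩ := csInf_mem hS
    have hx : x ∈ PrefInv.U (List.replicate (Encodable.encode c) true ++ false :: p) := by
      apply PrefInv.U_mem
      rw [Denumerable.ofNat_encode]
      exact PrefInv.run_correct hApre hc hp
    have hle : Kc PrefInv.U x ≤
        (((List.replicate (Encodable.encode c) true ++ false :: p).length : ℕ) : ℕ∞) :=
      sInf_le ⟨_, hx, rfl⟩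
    refine hle.trans ?_
    rw [show Kc A x = ((p.length : ℕ) : ℕ∞) from hlen.symm]
    rw [← Nat.cast_add]
    apply Nat.cast_le.mpr
    simp [List.length_replicate]
    omega
  · have hKA : Kc A x = ⊤ := by
      rw [Kc, Set.not_nonempty_iff_eq_empty.mp hS, sInf_empty]
    rw [hKA, top_add]
    exact le_top
end

section
/- Martin-Löf's theorem: there is a largest set of infinite binary sequences that is constructively of probability zero; i.e., there exists a set N ⊆ {0,1}^ℕ which is constructively of probability zero and which contains every set that is constructively of probability zero. -/
open scoped ENNReal

/-- The cylinder of a finite binary string `u`: the set of infinite binary sequences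
extending `u`. -/
def cylinder (u : List Bool) : Set (ℕ → Bool) :=
  {α | ∀ i : Fin u.length, α i = u.get i}

/-- A set `N` of infinite binary sequences is constructively of probability zero
(with respect to a measure `μ`) if there is a partial computable
`u : ℕ × ℕ →. {0,1}*` with `N ⊆ ⋂_n ⋃_m I_{u(n,m)}` and
`μ(⋃_m I_{u(n,m)}) ≤ 2^(−n)` for all `n` (union over the `m` with `u(n,m)` defined). -/
def ConstructivelyNull (μ : MeasureTheory.Measure (ℕ → Bool))
    (N : Set (ℕ → Bool)) : Prop :=
  ∃ u : ℕ × ℕ →. List Bool, Partrec u ∧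
    (∀ n : ℕ, μ (⋃ m : ℕ, ⋃ h : (u (n, m)).Dom, cylinder ((u (n, m)).get h))
        ≤ (2 : ℝ≥0∞)⁻¹ ^ n) ∧
    N ⊆ ⋂ n : ℕ, ⋃ m : ℕ, ⋃ h : (u (n, m)).Dom, cylinder ((u (n, m)).get h)

namespace MLAux

open Nat.Partrec (Code)
open Nat.Partrec.Code

/-! ### Combinatorial part -/

/-- All binary strings of length `L`. -/
def exts : ℕ → List (List Bool)
  | 0 => [[]]
  | L + 1 => (exts L).flatMap fun w => [false :: w, true :: w]

lemma mem_exts : ∀ {L : ℕ} {w : List Bool}, w ∈ exts L ↔ w.length = L := by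
  intro L
  induction L with
  | zero => intro w; simp [exts, List.length_eq_zero_iff]
  | succ L ih =>
    intro w
    simp only [exts, List.mem_flatMap, List.mem_cons, List.mem_singleton]
    constructor
    · rintro ⟨w', hw', (rfl | (rfl | h))⟩
      · simp [ih.1 hw']
      · simp [ih.1 hw']
      · simp at h
    · intro h
      cases w with
      | nil => simp at h
      | cons b w' =>
        exact ⟨w', ih.2 (by simpa using h), by cases b <;> simp⟩

lemma exts_nodup (L : ℕ) : (exts L).Nodup := by
  induction L with
  | zero => simp [exts]
  | succ L ih =>
    rw [exts, List.nodup_flatMap]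
    refine ⟨fun w _ => by simp, ?_⟩
    refine ih.imp ?_
    intro w w' hne
    intro x hx hx'
    simp only [List.mem_cons, List.not_mem_nil, or_false] at hx hx'
    apply hne
    rcases hx with rfl | rfl <;> rcases hx' with h | h <;> simp_all

/-- Boolean prefix test. -/
def isPref (v w : List Bool) : Bool :=
  decide (v.length ≤ w.length) &&
    (List.range v.length).all fun i => v.getD i false == w.getD i false

lemma isPref_iff {v w : List Bool} : isPref v w = true ↔ v <+: w := by
  rw [List.prefix_iff_getElem]
  simp only [isPref, Bool.and_eq_true, decide_eq_true_eq, List.all_eq_true, List.mem_range,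
    beq_iff_eq]
  constructor
  · rintro ⟨h1, h2⟩
    refine ⟨h1, fun i hi => ?_⟩
    have := h2 i hi
    rwa [List.getD_eq_getElem _ _ hi, List.getD_eq_getElem _ _ (lt_of_lt_of_le hi h1)] at this
  · rintro ⟨h1, h2⟩
    refine ⟨h1, fun i hi => ?_⟩
    rw [List.getD_eq_getElem _ _ hi, List.getD_eq_getElem _ _ (lt_of_lt_of_le hi h1)]
    exact h2 i hi

/-- Does some string in `l` cover (is a prefix of) `w`? -/
def covers (l : List (List Bool)) (w : List Bool) : Bool := l.any fun v => isPref v w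

lemma covers_iff {l : List (List Bool)} {w : List Bool} :
    covers l w = true ↔ ∃ v ∈ l, v <+: w := by
  simp [covers, List.any_eq_true, isPref_iff]

def maxLen (l : List (List Bool)) : ℕ := l.foldr (fun v r => max v.length r) 0

lemma length_le_maxLen {l : List (List Bool)} {v : List Bool} (hv : v ∈ l) :
    v.length ≤ maxLen l := by
  induction l with
  | nil => simp at hv
  | cons a l ih =>
    rcases List.mem_cons.1 hv with rfl | h
    · exact le_max_left _ _
    · exact le_trans (ih h) (le_max_right _ _)

def cnt (l : List (List Bool)) : ℕ :=
  ((exts (maxLen l)).filter fun w => covers l w).length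

def ok (n : ℕ) (l : List (List Bool)) : Bool :=
  decide (cnt l * 2 ^ n ≤ 2 ^ maxLen l)

/-- The union of the cylinders of the strings in `l`. -/
def Sl (l : List (List Bool)) : Set (ℕ → Bool) := ⋃ v ∈ l, cylinder v

lemma measurableSet_cylinder (u : List Bool) : MeasurableSet (cylinder u) := by
  have : cylinder u = ⋂ i : Fin u.length, (fun α : ℕ → Bool => α i) ⁻¹' {u.get i} := by
    ext x; simp [cylinder]
  rw [this]
  exact MeasurableSet.iInter fun i =>
    (measurable_pi_apply (i : ℕ)) (measurableSet_singleton _)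

lemma cylinder_disjoint {w w' : List Bool} (hlen : w.length = w'.length) (hne : w ≠ w') :
    Disjoint (cylinder w) (cylinder w') := by
  rw [Set.disjoint_left]
  intro x hx hx'
  apply hne
  apply List.ext_getElem hlen
  intro i h1 h2
  have e1 := hx ⟨i, h1⟩
  have e2 := hx' ⟨i, h2⟩
  simp only [List.get_eq_getElem] at e1 e2
  rw [← e1, ← e2]

lemma Sl_eq (l : List (List Bool)) :
    Sl l = ⋃ w ∈ (exts (maxLen l)).filter (fun w => covers l w), cylinder w := by
  apply Set.Subset.antisymm
  · intro x hx
    rcases Set.mem_iUnion₂.1 hx with ⟨v, hv, hxv⟩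
    set L := maxLen l with hL
    set w : List Bool := List.ofFn (fun i : Fin L => x i) with hw
    have hwlen : w.length = L := by simp [hw]
    have hvw : v <+: w := by
      rw [List.prefix_iff_getElem]
      refine ⟨by rw [hwlen]; exact length_le_maxLen hv, fun i hi => ?_⟩
      have h2 : i < w.length := lt_of_lt_of_le hi (by rw [hwlen]; exact length_le_maxLen hv)
      have : w[i] = x i := by simp [hw]
      rw [this]
      exact (hxv ⟨i, hi⟩).symm
    have hwmem : w ∈ (exts L).filter (fun w => covers l w) := by
      rw [List.mem_filter]
      exact ⟨mem_exts.2 hwlen, covers_iff.2 ⟨v, hv, hvw⟩⟩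
    refine Set.mem_iUnion₂.2 ⟨w, hwmem, ?_⟩
    intro i
    simp [hw]
  · intro x hx
    rcases Set.mem_iUnion₂.1 hx with ⟨w, hw, hxw⟩
    rw [List.mem_filter] at hw
    rcases covers_iff.1 hw.2 with ⟨v, hv, hvw⟩
    refine Set.mem_iUnion₂.2 ⟨v, hv, ?_⟩
    intro i
    have hi : (i : ℕ) < w.length := lt_of_lt_of_le i.2 hvw.length_le
    have := hxw ⟨i, hi⟩
    simp only [List.get_eq_getElem] at this ⊢
    rw [this, hvw.getElem i.2]

lemma measure_Sl (μ : MeasureTheory.Measure (ℕ → Bool))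
    (hμ : ∀ u : List Bool, μ (cylinder u) = (2 : ℝ≥0∞)⁻¹ ^ u.length)
    (l : List (List Bool)) :
    μ (Sl l) = (cnt l : ℝ≥0∞) * (2 : ℝ≥0∞)⁻¹ ^ maxLen l := by
  rw [Sl_eq]
  set lst := (exts (maxLen l)).filter (fun w => covers l w) with hlst
  have hnd : lst.Nodup := (exts_nodup _).filter _
  have hlen : ∀ w ∈ lst, w.length = maxLen l := fun w hw =>
    mem_exts.1 (List.mem_of_mem_filter hw)
  have h1 : (⋃ w ∈ lst, cylinder w) = ⋃ w ∈ lst.toFinset, cylinder w := by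
    simp
  rw [h1, MeasureTheory.measure_biUnion_finset ?_ (fun w _ => measurableSet_cylinder w)]
  · rw [Finset.sum_congr rfl (fun w hw => by
      rw [hμ w, hlen w (List.mem_toFinset.1 hw)])]
    rw [Finset.sum_const, List.toFinset_card_of_nodup hnd]
    simp [cnt, nsmul_eq_mul, hlst]
  · intro w hw w' hw' hne
    exact cylinder_disjoint
      (by rw [hlen w (List.mem_toFinset.1 hw), hlen w' (List.mem_toFinset.1 hw')]) hne

lemma ok_iff (μ : MeasureTheory.Measure (ℕ → Bool))
    (hμ : ∀ u : List Bool, μ (cylinder u) = (2 : ℝ≥0∞)⁻¹ ^ u.length)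
    {n : ℕ} {l : List (List Bool)} :
    ok n l = true ↔ μ (Sl l) ≤ (2 : ℝ≥0∞)⁻¹ ^ n := by
  rw [measure_Sl μ hμ, ok, decide_eq_true_eq]
  set L := maxLen l
  set a := cnt l
  have h2 : (2 : ℝ≥0∞) ≠ 0 := two_ne_zero
  have h2t : (2 : ℝ≥0∞) ≠ ⊤ := ENNReal.ofNat_ne_top
  have e1 : ∀ k : ℕ, (2 : ℝ≥0∞)⁻¹ ^ k * 2 ^ k = 1 := fun k => by
    rw [← mul_pow, ENNReal.inv_mul_cancel h2 h2t, one_pow]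
  have hc0 : (2 : ℝ≥0∞) ^ L * 2 ^ n ≠ 0 := by
    exact mul_ne_zero (pow_ne_zero _ h2) (pow_ne_zero _ h2)
  have hct : (2 : ℝ≥0∞) ^ L * 2 ^ n ≠ ⊤ :=
    ENNReal.mul_ne_top (ENNReal.pow_ne_top h2t) (ENNReal.pow_ne_top h2t)
  have eL : (a : ℝ≥0∞) * 2⁻¹ ^ L * (2 ^ L * 2 ^ n) = (a : ℝ≥0∞) * 2 ^ n := by
    calc (a : ℝ≥0∞) * 2⁻¹ ^ L * (2 ^ L * 2 ^ n)
        = (a : ℝ≥0∞) * 2 ^ n * (2⁻¹ ^ L * 2 ^ L) := by ring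
      _ = (a : ℝ≥0∞) * 2 ^ n := by rw [e1, mul_one]
  have eR : (2 : ℝ≥0∞)⁻¹ ^ n * (2 ^ L * 2 ^ n) = 2 ^ L := by
    calc (2 : ℝ≥0∞)⁻¹ ^ n * (2 ^ L * 2 ^ n) = 2 ^ L * (2⁻¹ ^ n * 2 ^ n) := by ring
      _ = 2 ^ L := by rw [e1, mul_one]
  have main : ((a : ℝ≥0∞) * 2⁻¹ ^ L ≤ 2⁻¹ ^ n) ↔ ((a : ℝ≥0∞) * 2 ^ n ≤ 2 ^ L) := by
    rw [← ENNReal.mul_le_mul_iff_left hc0 hct, eL, eR]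
  rw [main]
  constructor
  · intro h; exact_mod_cast h
  · intro h; exact_mod_cast h

/-! ### The universal test -/

/-- Stage `t` (coding a pair `(m, s)`) of the dovetailed enumeration of the outputs of the
`e`-th partial computable function at level `n`. -/
def stage (e n t : ℕ) : Option (List Bool) :=
  (evaln t.unpair.2 (Denumerable.ofNat Code e) (Nat.pair n t.unpair.1)).bind fun k =>
    Encodable.decode (α := List Bool) k

def push (n : ℕ) (l : List (List Bool)) : Option (List Bool) → List (List Bool)
  | none => l
  | some v => bif ok n (l ++ [v]) then l ++ [v] else l

/-- Strings accepted from test `e` at level `n` after `t` stages. -/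
def accList (e n : ℕ) : ℕ → List (List Bool) :=
  Nat.rec [] fun t ih => push n ih (stage e n t)

/-- The string accepted at stage `t`, if any. -/
def outF (e n t : ℕ) : Option (List Bool) :=
  match stage e n t with
  | none => none
  | some v => bif ok n (accList e n t ++ [v]) then some v else none

/-- The universal Martin-Löf test. -/
def U : ℕ × ℕ →. List Bool := fun p =>
  Part.ofOption (outF p.2.unpair.1 (p.1 + p.2.unpair.1 + 1) p.2.unpair.2)

/-! ### Computability -/

section Computability

open Primrec

private lemma any_foldr {α : Type*} (l : List α) (p : α → Bool) :
    l.any p = l.foldr (fun a b => p a || b) false := by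
  induction l <;> simp [*]

private lemma all_foldr {α : Type*} (l : List α) (p : α → Bool) :
    l.all p = l.foldr (fun a b => p a && b) true := by
  induction l <;> simp [*]

lemma primrec_exts : Primrec exts := by
  have hg : Primrec₂ fun (_ : ℕ) (ih : List (List Bool)) =>
      ih.flatMap fun w => [false :: w, true :: w] := by
    refine Primrec.list_flatMap Primrec.snd ?_
    exact Primrec.list_cons.comp₂
      (Primrec.list_cons.comp₂ (Primrec₂.const false) Primrec₂.right)
      (Primrec.list_cons.comp₂
        (Primrec.list_cons.comp₂ (Primrec₂.const true) Primrec₂.right)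
        (Primrec₂.const []))
  refine (Primrec.nat_rec₁ [[]] hg).of_eq ?_
  intro n; induction n with
  | zero => rfl
  | succ n ih => simp [exts, ← ih]

lemma primrec_isPref : Primrec₂ isPref := by
  have hlen1 : Primrec fun p : List Bool × List Bool => p.1.length :=
    Primrec.list_length.comp Primrec.fst
  have hlen2 : Primrec fun p : List Bool × List Bool => p.2.length :=
    Primrec.list_length.comp Primrec.snd
  have h1 : Primrec fun p : List Bool × List Bool => decide (p.1.length ≤ p.2.length) :=
    PrimrecPred.decide (Primrec.nat_le.comp hlen1 hlen2)
  have hget1 : Primrec fun q : (List Bool × List Bool) × ℕ × Bool => q.1.1.getD q.2.1 false :=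
    (Primrec.list_getD false).comp (Primrec.fst.comp Primrec.fst)
      (Primrec.fst.comp Primrec.snd)
  have hget2 : Primrec fun q : (List Bool × List Bool) × ℕ × Bool => q.1.2.getD q.2.1 false :=
    (Primrec.list_getD false).comp (Primrec.snd.comp Primrec.fst)
      (Primrec.fst.comp Primrec.snd)
  have hbeq : Primrec fun q : (List Bool × List Bool) × ℕ × Bool =>
      (q.1.1.getD q.2.1 false == q.1.2.getD q.2.1 false) :=
    Primrec.beq.comp hget1 hget2
  have hh : Primrec fun q : (List Bool × List Bool) × ℕ × Bool =>
      ((q.1.1.getD q.2.1 false == q.1.2.getD q.2.1 false) && q.2.2) :=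
    (Primrec.dom_bool₂ (· && ·)).comp hbeq (Primrec.snd.comp Primrec.snd)
  have h2 : Primrec fun p : List Bool × List Bool =>
      (List.range p.1.length).foldr
        (fun i b => (p.1.getD i false == p.2.getD i false) && b) true :=
    Primrec.list_foldr (Primrec.list_range.comp hlen1) (Primrec.const true) hh.to₂
  refine Primrec.of_eq ((Primrec.dom_bool₂ (· && ·)).comp h1 h2) ?_
  rintro ⟨v, w⟩
  simp [isPref, all_foldr]

lemma primrec_covers : Primrec₂ covers := by
  have hh : Primrec fun q : (List (List Bool) × List Bool) × List Bool × Bool =>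
      (isPref q.2.1 q.1.2 || q.2.2) :=
    (Primrec.dom_bool₂ (· || ·)).comp
      (primrec_isPref.comp (Primrec.fst.comp Primrec.snd) (Primrec.snd.comp Primrec.fst))
      (Primrec.snd.comp Primrec.snd)
  have h : Primrec fun p : List (List Bool) × List Bool =>
      p.1.foldr (fun v b => isPref v p.2 || b) false :=
    Primrec.list_foldr Primrec.fst (Primrec.const false) hh.to₂
  refine Primrec.of_eq h ?_
  rintro ⟨l, w⟩
  simp [covers, any_foldr]

lemma primrec_maxLen : Primrec maxLen := by
  have hh : Primrec fun q : List (List Bool) × List Bool × ℕ => max q.2.1.length q.2.2 :=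
    Primrec.nat_max.comp (Primrec.list_length.comp (Primrec.fst.comp Primrec.snd))
      (Primrec.snd.comp Primrec.snd)
  exact Primrec.list_foldr Primrec.id (Primrec.const 0) hh.to₂

lemma primrec_cnt : Primrec cnt := by
  have hg : Primrec fun q : List (List Bool) × List Bool =>
      (bif covers q.1 q.2 then some q.2 else none) :=
    Primrec.cond (primrec_covers.comp Primrec.fst Primrec.snd)
      (Primrec.option_some.comp Primrec.snd) (Primrec.const none)
  have h : Primrec fun l : List (List Bool) =>
      ((exts (maxLen l)).filterMap fun w => bif covers l w then some w else none).length :=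
    Primrec.list_length.comp
      (Primrec.listFilterMap (primrec_exts.comp primrec_maxLen) hg.to₂)
  refine Primrec.of_eq h ?_
  intro l
  have : ∀ (ws : List (List Bool)),
      (ws.filterMap fun w => bif covers l w then some w else none) =
        ws.filter fun w => covers l w := by
    intro ws
    induction ws with
    | nil => rfl
    | cons a ws ih =>
      rw [List.filterMap_cons, List.filter_cons]
      cases h : covers l a <;> simp [h, ih]
  rw [cnt, this]

lemma primrec_pow : Primrec₂ ((· ^ ·) : ℕ → ℕ → ℕ) :=
  Primrec₂.unpaired'.1 Nat.Primrec.pow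

lemma primrec_ok : Primrec₂ ok := by
  have h1 : Primrec fun p : ℕ × List (List Bool) => cnt p.2 * 2 ^ p.1 :=
    Primrec.nat_mul.comp (primrec_cnt.comp Primrec.snd)
      (primrec_pow.comp (Primrec.const 2) Primrec.fst)
  have h2 : Primrec fun p : ℕ × List (List Bool) => 2 ^ maxLen p.2 :=
    primrec_pow.comp (Primrec.const 2) (primrec_maxLen.comp Primrec.snd)
  exact PrimrecPred.decide (Primrec.nat_le.comp h1 h2)

lemma primrec_push :
    Primrec fun p : ℕ × List (List Bool) × Option (List Bool) => push p.1 p.2.1 p.2.2 := by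
  have happ : Primrec fun q : (ℕ × List (List Bool) × Option (List Bool)) × List Bool =>
      q.1.2.1 ++ [q.2] :=
    Primrec.list_concat.comp (Primrec.fst.comp (Primrec.snd.comp Primrec.fst)) Primrec.snd
  have hok : Primrec fun q : (ℕ × List (List Bool) × Option (List Bool)) × List Bool =>
      ok q.1.1 (q.1.2.1 ++ [q.2]) :=
    primrec_ok.comp (Primrec.fst.comp Primrec.fst) happ
  have hg : Primrec fun q : (ℕ × List (List Bool) × Option (List Bool)) × List Bool =>
      (bif ok q.1.1 (q.1.2.1 ++ [q.2]) then q.1.2.1 ++ [q.2] else q.1.2.1) :=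
    Primrec.cond hok happ (Primrec.fst.comp (Primrec.snd.comp Primrec.fst))
  refine (Primrec.option_casesOn (Primrec.snd.comp Primrec.snd)
    (Primrec.fst.comp Primrec.snd) hg.to₂).of_eq ?_
  rintro ⟨n, l, _ | v⟩ <;> rfl

lemma primrec_stage : Primrec fun q : (ℕ × ℕ) × ℕ => stage q.1.1 q.1.2 q.2 := by
  have h1 : Primrec fun q : (ℕ × ℕ) × ℕ => q.2.unpair.2 :=
    Primrec.snd.comp (Primrec.unpair.comp Primrec.snd)
  have h2 : Primrec fun q : (ℕ × ℕ) × ℕ => Denumerable.ofNat Code q.1.1 :=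
    (Primrec.ofNat Code).comp (Primrec.fst.comp Primrec.fst)
  have h3 : Primrec fun q : (ℕ × ℕ) × ℕ => Nat.pair q.1.2 q.2.unpair.1 :=
    Primrec₂.natPair.comp (Primrec.snd.comp Primrec.fst)
      (Primrec.fst.comp (Primrec.unpair.comp Primrec.snd))
  have hev : Primrec fun q : (ℕ × ℕ) × ℕ =>
      evaln q.2.unpair.2 (Denumerable.ofNat Code q.1.1) (Nat.pair q.1.2 q.2.unpair.1) :=
    Nat.Partrec.Code.primrec_evaln.comp ((h1.pair h2).pair h3)
  have hdec : Primrec fun r : ((ℕ × ℕ) × ℕ) × ℕ =>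
      (Encodable.decode (α := List Bool) r.2) :=
    Primrec.decode.comp Primrec.snd
  exact Primrec.option_bind hev hdec.to₂

lemma primrec_accList : Primrec₂ fun (p : ℕ × ℕ) (t : ℕ) => accList p.1 p.2 t := by
  have hstage' : Primrec fun q : (ℕ × ℕ) × ℕ × List (List Bool) => stage q.1.1 q.1.2 q.2.1 :=
    primrec_stage.comp (Primrec.fst.pair (Primrec.fst.comp Primrec.snd))
  have hg : Primrec fun q : (ℕ × ℕ) × ℕ × List (List Bool) =>
      push q.1.2 q.2.2 (stage q.1.1 q.1.2 q.2.1) :=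
    primrec_push.comp ((Primrec.snd.comp Primrec.fst).pair
      ((Primrec.snd.comp Primrec.snd).pair hstage'))
  exact Primrec.nat_rec (Primrec.const ([] : List (List Bool))) hg.to₂

lemma primrec_outF : Primrec fun q : (ℕ × ℕ) × ℕ => outF q.1.1 q.1.2 q.2 := by
  have hacc : Primrec fun r : ((ℕ × ℕ) × ℕ) × List Bool =>
      accList r.1.1.1 r.1.1.2 r.1.2 ++ [r.2] :=
    Primrec.list_concat.comp
      (primrec_accList.comp (Primrec.fst.comp Primrec.fst) (Primrec.snd.comp Primrec.fst))
      Primrec.snd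
  have hok : Primrec fun r : ((ℕ × ℕ) × ℕ) × List Bool =>
      ok r.1.1.2 (accList r.1.1.1 r.1.1.2 r.1.2 ++ [r.2]) :=
    primrec_ok.comp (Primrec.snd.comp (Primrec.fst.comp Primrec.fst)) hacc
  have hg : Primrec fun r : ((ℕ × ℕ) × ℕ) × List Bool =>
      (bif ok r.1.1.2 (accList r.1.1.1 r.1.1.2 r.1.2 ++ [r.2]) then some r.2 else none) :=
    Primrec.cond hok (Primrec.option_some.comp Primrec.snd) (Primrec.const none)
  refine (Primrec.option_casesOn primrec_stage (Primrec.const none) hg.to₂).of_eq ?_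
  rintro ⟨⟨e, n⟩, t⟩
  rcases hs : stage e n t with _ | v <;> simp [outF, hs]

lemma partrec_U : Partrec U := by
  have h1 : Primrec fun p : ℕ × ℕ => p.2.unpair.1 :=
    Primrec.fst.comp (Primrec.unpair.comp Primrec.snd)
  have h2 : Primrec fun p : ℕ × ℕ => p.1 + p.2.unpair.1 + 1 :=
    Primrec.succ.comp (Primrec.nat_add.comp Primrec.fst h1)
  have h3 : Primrec fun p : ℕ × ℕ => p.2.unpair.2 :=
    Primrec.snd.comp (Primrec.unpair.comp Primrec.snd)
  have h : Primrec fun p : ℕ × ℕ =>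
      outF p.2.unpair.1 (p.1 + p.2.unpair.1 + 1) p.2.unpair.2 :=
    primrec_outF.comp ((h1.pair h2).pair h3)
  exact Computable.ofOption h.to_comp

end Computability

/-! ### Properties of the universal test -/

lemma accList_succ (e n t : ℕ) :
    accList e n (t + 1) = push n (accList e n t) (stage e n t) := rfl

lemma ok_nil (n : ℕ) : ok n ([] : List (List Bool)) = true := by
  have hc : cnt ([] : List (List Bool)) = 0 := by
    simp [cnt, covers, maxLen]
  simp [ok, hc]

lemma ok_accList (e n t : ℕ) : ok n (accList e n t) = true := by
  induction t with
  | zero => exact ok_nil n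
  | succ t ih =>
    rw [accList_succ]
    rcases hs : stage e n t with _ | v
    · simp only [push]; exact ih
    · rcases hok : ok n (accList e n t ++ [v]) with _ | _
      · simpa [push, hok] using ih
      · simp [push, hok]

lemma accList_subset_succ (e n t : ℕ) : accList e n t ⊆ accList e n (t + 1) := by
  rw [accList_succ]
  rcases stage e n t with _ | v
  · exact fun _ h => h
  · rw [push]
    rcases ok n (accList e n t ++ [v]) with _ | _
    · exact fun _ h => h
    · exact List.subset_append_left _ _

lemma accList_mono (e n : ℕ) {t t' : ℕ} (h : t ≤ t') :
    accList e n t ⊆ accList e n t' := by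
  induction t' with
  | zero => rw [Nat.le_zero.1 h]; exact fun _ h => h
  | succ t' ih =>
    rcases Nat.lt_or_ge t (t' + 1) with h' | h'
    · exact fun w hw => accList_subset_succ e n t' (ih (Nat.lt_succ_iff.1 h') hw)
    · rw [Nat.le_antisymm h h']; exact fun _ h => h

lemma mem_of_outF {e n t : ℕ} {v : List Bool} (h : outF e n t = some v) :
    v ∈ accList e n (t + 1) := by
  rcases hs : stage e n t with _ | w
  · simp [outF, hs] at h
  · rcases hok : ok n (accList e n t ++ [w]) with _ | _
    · simp [outF, hs, hok] at h
    · simp only [outF, hs, hok, cond_true, Option.some.injEq] at h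
      subst h
      rw [accList_succ, hs, push, hok, cond_true]
      exact List.mem_append_right _ (List.mem_singleton.2 rfl)

lemma accList_src {e n t : ℕ} {w : List Bool} (h : w ∈ accList e n t) :
    ∃ t', stage e n t' = some w := by
  induction t with
  | zero => simp [accList] at h
  | succ t ih =>
    rw [accList_succ] at h
    rcases hs : stage e n t with _ | v
    · rw [hs, push] at h; exact ih h
    · rw [hs] at h
      rcases hok : ok n (accList e n t ++ [v]) with _ | _
      · rw [push, hok, cond_false] at h; exact ih h
      · rw [push, hok, cond_true] at h
        rcases List.mem_append.1 h with h | h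
        · exact ih h
        · exact ⟨t, by rw [hs, List.mem_singleton.1 h]⟩

/-- The cylinder set attached to an optional string. -/
def CylO (o : Option (List Bool)) : Set (ℕ → Bool) := ⋃ v ∈ o, cylinder v

lemma part_iUnion (o : Option (List Bool)) :
    (⋃ h : (Part.ofOption o).Dom, cylinder ((Part.ofOption o).get h)) = CylO o := by
  cases o with
  | none =>
    simp [CylO, Part.ofOption]
  | some v =>
    simp [CylO, Part.ofOption]

lemma Sl_mono {l l' : List (List Bool)} (h : l ⊆ l') : Sl l ⊆ Sl l' := by
  intro x hx
  rcases Set.mem_iUnion₂.1 hx with ⟨v, hv, hxv⟩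
  exact Set.mem_iUnion₂.2 ⟨v, h hv, hxv⟩

lemma measure_A (μ : MeasureTheory.Measure (ℕ → Bool))
    (hμ : ∀ u : List Bool, μ (cylinder u) = (2 : ℝ≥0∞)⁻¹ ^ u.length) (e n : ℕ) :
    μ (⋃ t : ℕ, CylO (outF e n t)) ≤ (2 : ℝ≥0∞)⁻¹ ^ n := by
  have hsub : (⋃ t : ℕ, CylO (outF e n t)) ⊆ ⋃ t : ℕ, Sl (accList e n t) := by
    intro x hx
    rcases Set.mem_iUnion.1 hx with ⟨t, hxt⟩
    rcases ho : outF e n t with _ | v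
    · rw [ho] at hxt; simp [CylO] at hxt
    · rw [ho] at hxt
      have hxv : x ∈ cylinder v := by simpa [CylO] using hxt
      exact Set.mem_iUnion.2 ⟨t + 1, Set.mem_iUnion₂.2 ⟨v, mem_of_outF ho, hxv⟩⟩
  refine le_trans (MeasureTheory.measure_mono hsub) ?_
  have hdir : Directed (· ⊆ ·) fun t => Sl (accList e n t) := by
    intro t t'
    exact ⟨max t t', Sl_mono (accList_mono e n (le_max_left _ _)),
      Sl_mono (accList_mono e n (le_max_right _ _))⟩
  rw [Directed.measure_iUnion hdir]
  exact iSup_le fun t => (ok_iff μ hμ).1 (ok_accList e n t)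

lemma tsum_geom (n : ℕ) : (∑' e : ℕ, (2 : ℝ≥0∞)⁻¹ ^ (n + e + 1)) = (2 : ℝ≥0∞)⁻¹ ^ n := by
  have h : ∀ e : ℕ, (2 : ℝ≥0∞)⁻¹ ^ (n + e + 1) = 2⁻¹ ^ (n + 1) * 2⁻¹ ^ e := fun e => by
    rw [← pow_add]; congr 1; ring
  rw [tsum_congr h, ENNReal.tsum_mul_left, ENNReal.tsum_geometric]
  have h12 : (1 : ℝ≥0∞) - 2⁻¹ = 2⁻¹ := ENNReal.one_sub_inv_two
  rw [h12, inv_inv, pow_succ, mul_assoc,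
    ENNReal.inv_mul_cancel two_ne_zero ENNReal.ofNat_ne_top, mul_one]

lemma measure_U_level (μ : MeasureTheory.Measure (ℕ → Bool))
    (hμ : ∀ u : List Bool, μ (cylinder u) = (2 : ℝ≥0∞)⁻¹ ^ u.length) (n : ℕ) :
    μ (⋃ m : ℕ, ⋃ h : (U (n, m)).Dom, cylinder ((U (n, m)).get h))
      ≤ (2 : ℝ≥0∞)⁻¹ ^ n := by
  have hrw : (⋃ m : ℕ, ⋃ h : (U (n, m)).Dom, cylinder ((U (n, m)).get h))
      = ⋃ e : ℕ, ⋃ t : ℕ, CylO (outF e (n + e + 1) t) := by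
    have h1 : ∀ m : ℕ, (⋃ h : (U (n, m)).Dom, cylinder ((U (n, m)).get h))
        = CylO (outF m.unpair.1 (n + m.unpair.1 + 1) m.unpair.2) := fun m =>
      part_iUnion (outF m.unpair.1 (n + m.unpair.1 + 1) m.unpair.2)
    exact (Set.iUnion_congr h1).trans
      (Set.iUnion_unpair fun e t => CylO (outF e (n + e + 1) t))
  rw [hrw]
  calc μ (⋃ e : ℕ, ⋃ t : ℕ, CylO (outF e (n + e + 1) t))
      ≤ ∑' e : ℕ, μ (⋃ t : ℕ, CylO (outF e (n + e + 1) t)) := MeasureTheory.measure_iUnion_le _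
    _ ≤ ∑' e : ℕ, (2 : ℝ≥0∞)⁻¹ ^ (n + e + 1) :=
        ENNReal.tsum_le_tsum fun e => measure_A μ hμ e (n + e + 1)
    _ = (2 : ℝ≥0∞)⁻¹ ^ n := tsum_geom n

lemma decode_pair (a b : ℕ) :
    (Encodable.decode (α := ℕ × ℕ) (Nat.pair a b)) = some (a, b) := by
  have h : Nat.pair a b = Encodable.encode ((a, b) : ℕ × ℕ) := rfl
  rw [h, Encodable.encodek]

lemma stage_sound {u' : ℕ × ℕ →. List Bool} {c : Code}
    (hc : eval c = fun k => Part.bind (Encodable.decode (α := ℕ × ℕ) k)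
      fun a => (u' a).map Encodable.encode)
    {n t : ℕ} {w : List Bool} (h : stage (Encodable.encode c) n t = some w) :
    w ∈ u' (n, t.unpair.1) := by
  rw [stage, Denumerable.ofNat_encode] at h
  rcases Option.bind_eq_some_iff.1 h with ⟨k, hk, hdk⟩
  have hkev : k ∈ eval c (Nat.pair n t.unpair.1) := evaln_sound hk
  rw [hc] at hkev
  simp only [decode_pair, Part.coe_some, Part.bind_eq_bind, Part.bind_some,
    Part.mem_map_iff] at hkev
  rcases hkev with ⟨w', hw', henc⟩
  have : w' = w := by
    have h1 : (Encodable.decode (α := List Bool) k) = some w' := by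
      rw [← henc, Encodable.encodek]
    rw [h1] at hdk
    exact (Option.some_inj.1 hdk)
  rwa [this] at hw'

end MLAux

/-- **Martin-Löf's theorem**: for the uniform (fair coin) measure `μ` on Cantor space
(characterized by `μ(I_u) = 2^(−|u|)`), there is a largest set constructively of
probability zero. -/
theorem exists_largest_constructively_null
    (μ : MeasureTheory.Measure (ℕ → Bool)) [MeasureTheory.IsProbabilityMeasure μ]
    (hμ : ∀ u : List Bool, μ (cylinder u) = (2 : ℝ≥0∞)⁻¹ ^ u.length) :
    ∃ N : Set (ℕ → Bool), ConstructivelyNull μ N ∧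
      ∀ N' : Set (ℕ → Bool), ConstructivelyNull μ N' → N' ⊆ N := by
  classical
  refine ⟨⋂ n : ℕ, ⋃ m : ℕ, ⋃ h : (MLAux.U (n, m)).Dom, cylinder ((MLAux.U (n, m)).get h),
    ⟨MLAux.U, MLAux.partrec_U, fun n => MLAux.measure_U_level μ hμ n, subset_rfl⟩, ?_⟩
  rintro N' ⟨u', hpr, hmeas, hsub⟩ x hx
  obtain ⟨c, hc⟩ := Nat.Partrec.Code.exists_code.1 hpr
  set e := Encodable.encode c with he
  refine Set.mem_iInter.2 fun n => ?_
  set n' := n + e + 1 with hn'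
  have hx' := Set.mem_iInter.1 (hsub hx) n'
  rcases Set.mem_iUnion.1 hx' with ⟨m, hm⟩
  rcases Set.mem_iUnion.1 hm with ⟨hdom, hxv⟩
  set v := (u' (n', m)).get hdom with hv
  have hvmem : v ∈ u' (n', m) := Part.get_mem hdom
  have henc : Encodable.encode v ∈ Nat.Partrec.Code.eval c (Nat.pair n' m) := by
    rw [hc]
    simp only [MLAux.decode_pair, Part.coe_some, Part.bind_eq_bind, Part.bind_some,
      Part.mem_map_iff]
    exact ⟨v, hvmem, rfl⟩
  obtain ⟨s, hs⟩ := Nat.Partrec.Code.evaln_complete.1 henc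
  set t := Nat.pair m s with ht
  have hstage : MLAux.stage e n' t = some v := by
    rw [MLAux.stage, ht, Nat.unpair_pair, he, Denumerable.ofNat_encode]
    have hs' : Nat.Partrec.Code.evaln s c (Nat.pair n' m) = some (Encodable.encode v) :=
      Option.mem_def.1 hs
    rw [hs']
    simp [Encodable.encodek]
  have hacc_src : ∀ w ∈ MLAux.accList e n' t ++ [v], ∃ p, w ∈ u' (n', p) := by
    intro w hw
    rcases List.mem_append.1 hw with hw | hw
    · obtain ⟨t', ht'⟩ := MLAux.accList_src hw
      exact ⟨t'.unpair.1, MLAux.stage_sound hc ht'⟩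
    · rw [List.mem_singleton.1 hw]; exact ⟨m, hvmem⟩
  have hSl : MLAux.Sl (MLAux.accList e n' t ++ [v]) ⊆
      ⋃ p : ℕ, ⋃ h : (u' (n', p)).Dom, cylinder ((u' (n', p)).get h) := by
    intro y hy
    rcases Set.mem_iUnion₂.1 hy with ⟨w, hw, hyw⟩
    obtain ⟨p, hp⟩ := hacc_src w hw
    have hd : (u' (n', p)).Dom := Part.dom_iff_mem.2 ⟨w, hp⟩
    refine Set.mem_iUnion.2 ⟨p, Set.mem_iUnion.2 ⟨hd, ?_⟩⟩
    rw [Part.get_eq_of_mem hp hd]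
    exact hyw
  have hok : MLAux.ok n' (MLAux.accList e n' t ++ [v]) = true :=
    (MLAux.ok_iff μ hμ).2 (le_trans (MeasureTheory.measure_mono hSl) (hmeas n'))
  have houtF : MLAux.outF e n' t = some v := by
    simp [MLAux.outF, hstage, hok]
  refine Set.mem_iUnion.2 ⟨Nat.pair e t, ?_⟩
  have hU : MLAux.U (n, Nat.pair e t) = Part.some v := by
    show Part.ofOption (MLAux.outF (Nat.pair e t).unpair.1
      (n + (Nat.pair e t).unpair.1 + 1) (Nat.pair e t).unpair.2) = Part.some v
    rw [Nat.unpair_pair]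
    show Part.ofOption (MLAux.outF e (n + e + 1) t) = Part.some v
    rw [← hn', houtF]
    rfl
  rw [hU]
  exact Set.mem_iUnion.2 ⟨trivial, hxv⟩
end

section
/- Large oscillations theorem (Martin-Löf): let f : ℕ → ℕ be a computable function such that the series Σ_{n∈ℕ} 2^{−f(n)} diverges. Then for every infinite binary sequence α = a₀a₁a₂… there are infinitely many n such that K(a₀…aₙ | n) < n − f(n). In particular (taking f constant), no infinite binary sequence satisfies K(a₀…aₙ | n) ≥ n − O(1) for all n. -/
set_option maxHeartbeats 1000000

/-- The finite prefix `a₀…aₙ` (of length `n+1`) of the infinite sequence `α`. -/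
def prefixSeq (α : ℕ → Bool) (n : ℕ) : List Bool :=
  List.ofFn fun i : Fin (n + 1) => α i

/-! ### Bit-list encodings -/

/-- value of a bit list, head = least significant bit -/
def bval : List Bool → ℕ
  | [] => 0
  | b :: l => b.toNat + 2 * bval l

theorem bval_bits (n : ℕ) : bval n.bits = n := by
  induction n using Nat.binaryRec' with
  | zero => simp [Nat.zero_bits, bval]
  | bit b n h ih =>
    rw [Nat.bits_append_bit n b h]
    simp [bval, ih, Nat.bit_val]; ring

/-- little-endian encoding of `a` with exactly `L` bits -/
def encLE : ℕ → ℕ → List Bool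
  | 0, _ => []
  | L + 1, a => decide (a % 2 = 1) :: encLE L (a / 2)

theorem length_encLE (L a : ℕ) : (encLE L a).length = L := by
  induction L generalizing a with
  | zero => rfl
  | succ L ih => simp [encLE, ih]

theorem bval_encLE (L a : ℕ) : bval (encLE L a) = a % 2 ^ L := by
  induction L generalizing a with
  | zero => simp [encLE, bval, Nat.mod_one]
  | succ L ih =>
    rw [encLE, bval, ih]
    rcases Nat.mod_two_eq_zero_or_one a with h | h <;>
      · rw [pow_succ']
        rw [Nat.mod_mul]
        simp [h]

/-- numeric value of the prefix, most significant bit first -/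
def aval (α : ℕ → Bool) : ℕ → ℕ
  | 0 => (α 0).toNat
  | n + 1 => 2 * aval α n + (α (n + 1)).toNat

theorem aval_lt (α : ℕ → Bool) (n : ℕ) : aval α n < 2 ^ (n + 1) := by
  induction n with
  | zero => have := Bool.toNat_le (α 0); simpa [aval] using by omega
  | succ n ih =>
    have : (α (n+1)).toNat ≤ 1 := Bool.toNat_le _
    rw [aval]
    have : 2 ^ (n + 1 + 1) = 2 * 2 ^ (n + 1) := by ring
    omega

theorem prefixSeq_succ (α : ℕ → Bool) (n : ℕ) :
    prefixSeq α (n + 1) = prefixSeq α n ++ [α (n + 1)] := by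
  rw [prefixSeq, List.ofFn_succ']
  simp [prefixSeq]

theorem encLE_aval (α : ℕ → Bool) (n : ℕ) :
    encLE (n + 1) (aval α n) = (prefixSeq α n).reverse := by
  induction n with
  | zero => cases h : α 0 <;> simp [encLE, aval, prefixSeq, h]
  | succ n ih =>
    have ht : (α (n+1)).toNat ≤ 1 := Bool.toNat_le _
    rw [encLE]
    have h1 : (2 * aval α n + (α (n + 1)).toNat) % 2 = (α (n+1)).toNat := by omega
    have h2 : (2 * aval α n + (α (n + 1)).toNat) / 2 = aval α n := by omega
    rw [show aval α (n+1) = 2 * aval α n + (α (n + 1)).toNat from rfl] at *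
    rw [h1, h2, ih, prefixSeq_succ]
    cases α (n+1) <;> simp

/-! ### Primitive-recursiveness of the encodings -/

theorem bval_eq_foldr (l : List Bool) :
    bval l = l.foldr (fun b s => b.toNat + 2 * s) 0 := by
  induction l with
  | nil => rfl
  | cons b l ih => simp [bval, ih]

theorem primrec_bval : Primrec bval := by
  have : Primrec fun l : List Bool =>
      l.foldr (fun b s => b.toNat + 2 * s) 0 := by
    apply Primrec.list_foldr (h := fun (_ : List Bool) (p : Bool × ℕ) => p.1.toNat + 2 * p.2)
      Primrec.id (Primrec.const 0)
    have hto : Primrec (fun b : Bool => b.toNat) := by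
      have := Primrec.cond Primrec.id (Primrec.const 1) (Primrec.const 0)
      exact this.of_eq (fun b => by cases b <;> rfl)
    exact (Primrec.nat_add.comp (hto.comp (Primrec.fst.comp Primrec.snd))
      (Primrec.nat_mul.comp (Primrec.const 2) (Primrec.snd.comp Primrec.snd))).to₂
  exact this.of_eq fun l => (bval_eq_foldr l).symm

theorem primrec_pow : Primrec₂ ((· ^ ·) : ℕ → ℕ → ℕ) :=
  Primrec₂.unpaired'.mp Nat.Primrec.pow

theorem encLE_eq_map (L a : ℕ) :
    encLE L a = (List.range L).map (fun i => decide (a / 2 ^ i % 2 = 1)) := by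
  induction L generalizing a with
  | zero => simp [encLE]
  | succ L ih =>
    rw [encLE, List.range_succ_eq_map, List.map_cons, List.map_map, ih]
    simp only [pow_zero, Nat.div_one]
    congr 1
    apply List.map_congr_left
    intro i _
    simp [Function.comp, pow_succ', Nat.div_div_eq_div_mul]

theorem primrec_encLE : Primrec₂ encLE := by
  have : Primrec fun p : ℕ × ℕ =>
      (List.range p.1).map (fun i => decide (p.2 / 2 ^ i % 2 = 1)) := by
    apply Primrec.list_map (Primrec.list_range.comp Primrec.fst)
    have hdiv : Primrec fun q : (ℕ × ℕ) × ℕ => q.1.2 / 2 ^ q.2 % 2 :=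
      Primrec.nat_mod.comp
        (Primrec.nat_div.comp (Primrec.snd.comp Primrec.fst)
          (primrec_pow.comp (Primrec.const 2) Primrec.snd)) (Primrec.const 2)
    exact (Primrec.eq.comp hdiv (Primrec.const 1)).decide.to₂
  exact this.to₂.of_eq fun a b => (encLE_eq_map a b).symm

/-! ### The machine -/

def Tf (fc : ℕ → ℕ) (d n : ℕ) : ℕ :=
  ∑ i ∈ Finset.range n, if 2 * (fc i + d) ≤ i then 2 ^ (n + 1 - (fc i + d)) else 0

theorem Tf_succ (fc : ℕ → ℕ) (d n : ℕ) :
    Tf fc d (n + 1) =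
      2 * Tf fc d n + (if 2 * (fc n + d) ≤ n then 2 ^ (n + 2 - (fc n + d)) else 0) := by
  rw [Tf, Finset.sum_range_succ, Tf, Finset.mul_sum]
  congr 1
  apply Finset.sum_congr rfl
  intro i hi
  rw [Finset.mem_range] at hi
  by_cases h : 2 * (fc i + d) ≤ i
  · rw [if_pos h, if_pos h, show n + 1 + 1 - (fc i + d) = (n + 1 - (fc i + d)) + 1 by omega,
      pow_succ]
    ring
  · simp [h]

theorem computable_Tf (fc : ℕ → ℕ) (hf : Computable fc) :
    Computable₂ (fun d n => Tf fc d n) := by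
  have hdec : Computable₂ fun a b : ℕ => decide (a ≤ b) :=
    Primrec.nat_le.decide.to_comp
  have hpow : Computable₂ ((· ^ ·) : ℕ → ℕ → ℕ) := primrec_pow.to_comp
  have hu : Computable fun q : (ℕ × ℕ) × ℕ × ℕ => fc q.2.1 + q.1.1 :=
    Primrec.nat_add.to_comp.comp (hf.comp (Computable.fst.comp Computable.snd))
      (Computable.fst.comp Computable.fst)
  have hk : Computable fun q : (ℕ × ℕ) × ℕ × ℕ => q.2.1 :=
    Computable.fst.comp Computable.snd
  have hs : Computable fun q : (ℕ × ℕ) × ℕ × ℕ => q.2.2 :=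
    Computable.snd.comp Computable.snd
  have hc : Computable fun q : (ℕ × ℕ) × ℕ × ℕ => decide (2 * (fc q.2.1 + q.1.1) ≤ q.2.1) :=
    hdec.comp (Primrec.nat_mul.to_comp.comp (Computable.const 2) hu) hk
  have hpw : Computable fun q : (ℕ × ℕ) × ℕ × ℕ => 2 ^ (q.2.1 + 2 - (fc q.2.1 + q.1.1)) :=
    hpow.comp (Computable.const 2)
      (Primrec.nat_sub.to_comp.comp (Primrec.nat_add.to_comp.comp hk (Computable.const 2)) hu)
  have hcnd : Computable fun q : (ℕ × ℕ) × ℕ × ℕ =>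
      cond (decide (2 * (fc q.2.1 + q.1.1) ≤ q.2.1)) (2 ^ (q.2.1 + 2 - (fc q.2.1 + q.1.1))) 0 :=
    Computable.cond hc hpw (Computable.const 0)
  have hfin : Computable fun q : (ℕ × ℕ) × ℕ × ℕ =>
      2 * q.2.2 + cond (decide (2 * (fc q.2.1 + q.1.1) ≤ q.2.1))
        (2 ^ (q.2.1 + 2 - (fc q.2.1 + q.1.1))) 0 :=
    Primrec.nat_add.to_comp.comp (Primrec.nat_mul.to_comp.comp (Computable.const 2) hs) hcnd
  have hstep : Computable₂ fun (a : ℕ × ℕ) (p : ℕ × ℕ) =>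
      2 * p.2 + (if 2 * (fc p.1 + a.1) ≤ p.1 then 2 ^ (p.1 + 2 - (fc p.1 + a.1)) else 0) := by
    show Computable fun q : (ℕ × ℕ) × ℕ × ℕ =>
      2 * q.2.2 + (if 2 * (fc q.2.1 + q.1.1) ≤ q.2.1
        then 2 ^ (q.2.1 + 2 - (fc q.2.1 + q.1.1)) else 0)
    exact hfin.of_eq fun q => by
      by_cases h : 2 * (fc q.2.1 + q.1.1) ≤ q.2.1 <;> simp [h]
  have := Computable.nat_rec (f := fun a : ℕ × ℕ => a.2) (g := fun _ : ℕ × ℕ => 0)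
    Computable.snd (Computable.const 0) hstep
  show Computable fun a : ℕ × ℕ => Tf fc a.1 a.2
  refine this.of_eq fun a => ?_
  obtain ⟨d, n⟩ := a
  simp only
  induction n with
  | zero => rfl
  | succ n ih => simp only at ih ⊢; rw [ih, Tf_succ]

def machF (fc : ℕ → ℕ) : List Bool × List Bool → List Bool := fun z =>
  (encLE (bval z.2 + 1)
    ((Tf fc ((bval z.2 + 2 - fc (bval z.2)) - z.1.length) (bval z.2) + bval z.1 +
        (2 ^ (bval z.2 + 1) - 1)) % 2 ^ (bval z.2 + 1))).reverse

theorem computable_machF (fc : ℕ → ℕ) (hf : Computable fc) : Computable (machF fc) := by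
  have hb := primrec_bval.to_comp
  have hn : Computable fun z : List Bool × List Bool => bval z.2 := hb.comp Computable.snd
  have hj : Computable fun z : List Bool × List Bool => bval z.1 := hb.comp Computable.fst
  have hlen : Computable fun z : List Bool × List Bool => z.1.length :=
    Primrec.list_length.to_comp.comp Computable.fst
  have hfn : Computable fun z : List Bool × List Bool => fc (bval z.2) := hf.comp hn
  have hd : Computable fun z : List Bool × List Bool =>
      (bval z.2 + 2 - fc (bval z.2)) - z.1.length :=
    Primrec.nat_sub.to_comp.comp
      (Primrec.nat_sub.to_comp.comp
        (Primrec.nat_add.to_comp.comp hn (Computable.const 2)) hfn) hlen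
  have hT : Computable fun z : List Bool × List Bool =>
      Tf fc ((bval z.2 + 2 - fc (bval z.2)) - z.1.length) (bval z.2) :=
    (computable_Tf fc hf).comp hd hn
  have hN : Computable fun z : List Bool × List Bool => 2 ^ (bval z.2 + 1) :=
    primrec_pow.to_comp.comp (Computable.const 2)
      (Primrec.nat_add.to_comp.comp hn (Computable.const 1))
  have harg : Computable fun z : List Bool × List Bool =>
      (Tf fc ((bval z.2 + 2 - fc (bval z.2)) - z.1.length) (bval z.2) + bval z.1 +
        (2 ^ (bval z.2 + 1) - 1)) % 2 ^ (bval z.2 + 1) :=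
    Primrec.nat_mod.to_comp.comp
      (Primrec.nat_add.to_comp.comp (Primrec.nat_add.to_comp.comp hT hj)
        (Primrec.nat_sub.to_comp.comp hN (Computable.const 1))) hN
  exact Primrec.list_reverse.to_comp.comp
    (primrec_encLE.to_comp.comp (Primrec.nat_add.to_comp.comp hn (Computable.const 1)) harg)

/-- The key combinatorial fact: under the landing conditions, the machine reproduces
the prefix from a short program. -/
theorem machine_hits (fc : ℕ → ℕ) (α : ℕ → Bool) (d n m : ℕ)
    (hgood : 2 * (fc n + d) ≤ n)
    (hC2 : Tf fc d n ≤ m * 2 ^ (n + 1) + aval α n + 1)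
    (hC3 : m * 2 ^ (n + 1) + aval α n < Tf fc d n + 2 ^ (n + 1 - (fc n + d))) :
    machF fc (encLE (n + 2 - (fc n + d)) (m * 2 ^ (n + 1) + aval α n + 1 - Tf fc d n),
        Nat.bits n) = prefixSeq α n := by
  set N := 2 ^ (n + 1) with hN
  set T := Tf fc d n with hT
  set a := aval α n with ha
  set j := m * N + a + 1 - T with hj
  set L := n + 2 - (fc n + d) with hL
  have hfdn : fc n + d ≤ n := by omega
  have hjle : j ≤ 2 ^ (n + 1 - (fc n + d)) := by omega
  have hjlt : j < 2 ^ L := by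
    have : 2 ^ (n + 1 - (fc n + d)) < 2 ^ L :=
      Nat.pow_lt_pow_right (by norm_num) (by omega)
    omega
  have haN : a < N := aval_lt α n
  have hN1 : 1 ≤ N := Nat.one_le_two_pow
  rw [machF]
  simp only [bval_bits, length_encLE, bval_encLE]
  have hdl : (n + 2 - fc n) - L = d := by omega
  rw [hdl]
  have hjval : j % 2 ^ L = j := Nat.mod_eq_of_lt hjlt
  rw [hjval]
  have hTj : T + j = m * N + a + 1 := by omega
  have hmul : (m + 1) * N = m * N + N := by ring
  have harg : T + j + (N - 1) = a + (m + 1) * N := by omega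
  rw [harg, Nat.add_mul_mod_self_right, Nat.mod_eq_of_lt haN, encLE_aval,
    List.reverse_reverse]

/-! ### Analytic lemmas -/

theorem sum_halfpow_le (n : ℕ) : ∑ i ∈ Finset.range n, ((2:ℝ)⁻¹) ^ (i / 2) ≤ 4 := by
  have key : ∀ m : ℕ, ∑ i ∈ Finset.range (2 * m), ((2:ℝ)⁻¹) ^ (i / 2)
      = 2 * ∑ k ∈ Finset.range m, ((2:ℝ)⁻¹) ^ k := by
    intro m
    induction m with
    | zero => simp
    | succ m ih =>
      rw [show 2 * (m + 1) = (2 * m + 1) + 1 by ring, Finset.sum_range_succ,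
        Finset.sum_range_succ, ih, Finset.sum_range_succ]
      have h1 : (2 * m) / 2 = m := by omega
      have h2 : (2 * m + 1) / 2 = m := by omega
      rw [h1, h2]; ring
  have hsub : ∑ i ∈ Finset.range n, ((2:ℝ)⁻¹) ^ (i / 2)
      ≤ ∑ i ∈ Finset.range (2 * n), ((2:ℝ)⁻¹) ^ (i / 2) := by
    apply Finset.sum_le_sum_of_subset_of_nonneg
    · exact Finset.range_subset_range.2 (by omega)
    · intro i _ _; positivity
  have hgeo : ∑ k ∈ Finset.range n, ((2:ℝ)⁻¹) ^ k ≤ 2 := by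
    have := sum_geometric_two_le n
    simpa [one_div] using this
  calc ∑ i ∈ Finset.range n, ((2:ℝ)⁻¹) ^ (i / 2)
      ≤ ∑ i ∈ Finset.range (2 * n), ((2:ℝ)⁻¹) ^ (i / 2) := hsub
    _ = 2 * ∑ k ∈ Finset.range n, ((2:ℝ)⁻¹) ^ k := key n
    _ ≤ 2 * 2 := by linarith
    _ = 4 := by norm_num

theorem summable_halfpow : Summable (fun i : ℕ => ((2:ℝ)⁻¹) ^ (i / 2)) :=
  summable_of_sum_range_le (fun _ => by positivity) sum_halfpow_le

theorem not_summable_good (f : ℕ → ℕ) (d : ℕ)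
    (hsum : ¬ Summable (fun n : ℕ => (2 : ℝ)⁻¹ ^ f n)) :
    ¬ Summable (fun i : ℕ =>
      if 2 * (f i + d) ≤ i then ((2:ℝ)⁻¹) ^ (f i + d) else 0) := by
  intro hp
  apply hsum
  have hg : Summable (fun i : ℕ => if 2 * (f i + d) ≤ i then ((2:ℝ)⁻¹) ^ (f i) else 0) := by
    have := hp.mul_left ((2:ℝ) ^ d)
    refine this.congr fun i => ?_
    by_cases h : 2 * (f i + d) ≤ i
    · rw [if_pos h, if_pos h, pow_add]
      rw [show (2:ℝ)^d * ((2:ℝ)⁻¹ ^ f i * (2:ℝ)⁻¹ ^ d)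
          = ((2:ℝ)*(2:ℝ)⁻¹)^d * (2:ℝ)⁻¹ ^ f i by rw [mul_pow]; ring]
      norm_num
    · rw [if_neg h, if_neg h, mul_zero]
  have hb : Summable (fun i : ℕ => if 2 * (f i + d) ≤ i then 0 else ((2:ℝ)⁻¹) ^ (f i)) := by
    apply Summable.of_nonneg_of_le (f := fun i => (2:ℝ) ^ d * ((2:ℝ)⁻¹) ^ (i / 2))
    · intro i; by_cases h : 2 * (f i + d) ≤ i
      · simp [h]
      · simp only [h, if_false]; positivity
    · intro i
      by_cases h : 2 * (f i + d) ≤ i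
      · simp only [h, if_true]; positivity
      · simp only [h, if_false]
        have hfd : i / 2 ≤ f i + d := by omega
        have : ((2:ℝ)⁻¹) ^ (f i + d) ≤ ((2:ℝ)⁻¹) ^ (i / 2) :=
          pow_le_pow_of_le_one (by norm_num) (by norm_num) hfd
        have h2 : ((2:ℝ)⁻¹) ^ (f i) = (2:ℝ) ^ d * ((2:ℝ)⁻¹) ^ (f i + d) := by
          rw [pow_add]; field_simp
          rw [← mul_pow]; norm_num
        rw [h2]
        have : (0:ℝ) < (2:ℝ) ^ d := by positivity
        nlinarith
    · exact summable_halfpow.mul_left _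
  have := hg.add hb
  refine this.congr fun i => ?_
  by_cases h : 2 * (f i + d) ≤ i <;> simp [h]

noncomputable def xval (α : ℕ → Bool) : ℝ :=
  ∑' i : ℕ, ((α i).toNat : ℝ) * ((2:ℝ)⁻¹) ^ (i + 1)

theorem summable_xterm (α : ℕ → Bool) :
    Summable fun i : ℕ => ((α i).toNat : ℝ) * ((2:ℝ)⁻¹) ^ (i + 1) := by
  apply Summable.of_nonneg_of_le (f := fun i : ℕ => ((2:ℝ)⁻¹) ^ i)
  · intro i; positivity
  · intro i
    have h1 : ((α i).toNat : ℝ) ≤ 1 := by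
      have := Bool.toNat_le (α i); exact_mod_cast this
    have h2 : ((2:ℝ)⁻¹) ^ (i+1) ≤ ((2:ℝ)⁻¹) ^ i :=
      pow_le_pow_of_le_one (by norm_num) (by norm_num) (by omega)
    have h3 : (0:ℝ) ≤ ((2:ℝ)⁻¹) ^ (i+1) := by positivity
    nlinarith
  · simpa [one_div] using summable_geometric_two

theorem xval_nonneg (α : ℕ → Bool) : 0 ≤ xval α :=
  tsum_nonneg fun i => by positivity

theorem sum_range_xterm (α : ℕ → Bool) (n : ℕ) :
    ∑ i ∈ Finset.range (n + 1), ((α i).toNat : ℝ) * ((2:ℝ)⁻¹) ^ (i + 1)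
      = (aval α n : ℝ) * ((2:ℝ)⁻¹) ^ (n + 1) := by
  induction n with
  | zero => simp [aval]
  | succ n ih =>
    rw [Finset.sum_range_succ, ih, aval]
    push_cast
    ring

theorem xval_lower (α : ℕ → Bool) (n : ℕ) :
    (aval α n : ℝ) * ((2:ℝ)⁻¹) ^ (n + 1) ≤ xval α := by
  rw [← sum_range_xterm]
  exact Summable.sum_le_tsum _ (fun i _ => by positivity) (summable_xterm α)

theorem xval_upper (α : ℕ → Bool) (n : ℕ) :
    xval α ≤ ((aval α n : ℝ) + 1) * ((2:ℝ)⁻¹) ^ (n + 1) := by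
  have hs := summable_xterm α
  have hsplit := (Summable.sum_add_tsum_nat_add (n + 1) hs).symm
  rw [xval, hsplit, sum_range_xterm]
  have htail : (∑' i : ℕ, ((α (i + (n+1))).toNat : ℝ) * ((2:ℝ)⁻¹) ^ ((i + (n+1)) + 1))
      ≤ ((2:ℝ)⁻¹) ^ (n + 1) := by
    have hb : ∀ i : ℕ, ((α (i + (n+1))).toNat : ℝ) * ((2:ℝ)⁻¹) ^ ((i + (n+1)) + 1)
        ≤ ((2:ℝ)⁻¹) ^ (i + (n + 2)) := by
      intro i
      have h1 : ((α (i + (n+1))).toNat : ℝ) ≤ 1 := by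
        have := Bool.toNat_le (α (i + (n+1))); exact_mod_cast this
      have h3 : (0:ℝ) ≤ ((2:ℝ)⁻¹) ^ ((i + (n+1)) + 1) := by positivity
      have : (i + (n+1)) + 1 = i + (n+2) := by omega
      rw [← this]
      nlinarith
    have hg2 : Summable fun i : ℕ => ((2:ℝ)⁻¹) ^ i := by
      simpa [one_div] using summable_geometric_two
    have hsum2 : Summable fun i : ℕ => ((2:ℝ)⁻¹) ^ (i + (n + 2)) :=
      (hg2.mul_right (((2:ℝ)⁻¹) ^ (n+2))).congr fun i => by rw [← pow_add]
    calc (∑' i : ℕ, ((α (i + (n+1))).toNat : ℝ) * ((2:ℝ)⁻¹) ^ ((i + (n+1)) + 1))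
        ≤ ∑' i : ℕ, ((2:ℝ)⁻¹) ^ (i + (n + 2)) := by
          apply Summable.tsum_le_tsum hb ((hs.comp_injective (add_left_injective (n+1))).congr
            (fun i => rfl)) hsum2
      _ = (∑' i : ℕ, ((2:ℝ)⁻¹) ^ i) * ((2:ℝ)⁻¹) ^ (n+2) := by
          rw [← tsum_mul_right]; congr 1; funext i; rw [pow_add]
      _ = 2 * ((2:ℝ)⁻¹) ^ (n+2) := by rw [tsum_geometric_inv_two]
      _ = ((2:ℝ)⁻¹) ^ (n+1) := by rw [pow_succ]; ring
  linarith

theorem Tf_cast (fc : ℕ → ℕ) (d n : ℕ) :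
    ((Tf fc d n : ℕ) : ℝ) = 2 ^ (n + 1) *
      ∑ i ∈ Finset.range n, (if 2 * (fc i + d) ≤ i then ((2:ℝ)⁻¹) ^ (fc i + d) else 0) := by
  rw [Tf, Nat.cast_sum, Finset.mul_sum]
  apply Finset.sum_congr rfl
  intro i hi
  rw [Finset.mem_range] at hi
  by_cases h : 2 * (fc i + d) ≤ i
  · rw [if_pos h, if_pos h]
    have hle : fc i + d ≤ n + 1 := by omega
    push_cast
    rw [show (2:ℝ) ^ (n+1) = 2 ^ (n + 1 - (fc i + d)) * 2 ^ (fc i + d) from by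
      rw [← pow_add]; congr 1; omega]
    rw [mul_assoc, show (2:ℝ) ^ (fc i + d) * (2:ℝ)⁻¹ ^ (fc i + d) = 1 from by
      rw [← mul_pow]; norm_num]
    ring
  · simp [h]

/-! ### The main construction -/

theorem main_construction (V : List Bool × List Bool →. List Bool) (hV : OptimalCond V)
    (f : ℕ → ℕ) (hf : Computable f) (hsum : ¬ Summable (fun n : ℕ => (2 : ℝ)⁻¹ ^ f n))
    (α : ℕ → Bool) :
    {n : ℕ | KcCond V (prefixSeq α n) (Nat.bits n) + (f n : ℕ∞) < (n : ℕ∞)}.Infinite := by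
  -- the machine and its optimality constant
  obtain ⟨c, hc⟩ := hV.2 (fun z => (machF f z : Part (List Bool))) (computable_machF f hf)
  set d := c + 3 with hd
  -- the weight function and its partial sums
  set hp : ℕ → ℝ := fun i => if 2 * (f i + d) ≤ i then ((2:ℝ)⁻¹) ^ (f i + d) else 0 with hhp
  have hp_nonneg : ∀ i, 0 ≤ hp i := by
    intro i; rw [hhp]; by_cases h : 2 * (f i + d) ≤ i
    · simp only [h, if_true]; positivity
    · simp [h]
  have hp_le_one : ∀ i, hp i ≤ 1 := by
    intro i; rw [hhp]; by_cases h : 2 * (f i + d) ≤ i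
    · simp only [h, if_true]
      exact pow_le_one₀ (by norm_num) (by norm_num)
    · simp [h]
  set G : ℕ → ℝ := fun n => ∑ i ∈ Finset.range n, hp i with hG
  have hGmono : ∀ k l, k ≤ l → G k ≤ G l := by
    intro k l hkl
    apply Finset.sum_le_sum_of_subset_of_nonneg (Finset.range_subset_range.2 hkl)
    intro i _ _; exact hp_nonneg i
  have hGtop : Filter.Tendsto G Filter.atTop Filter.atTop :=
    (not_summable_iff_tendsto_nat_atTop_of_nonneg hp_nonneg).mp (not_summable_good f d hsum)
  set x := xval α with hx
  have hx0 : 0 ≤ x := xval_nonneg α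
  -- for each m, the landing index
  have hex : ∀ m : ℕ, ∃ n, (m:ℝ) + x < G (n+1) := fun m =>
    ((hGtop.comp (Filter.tendsto_add_atTop_nat 1)).eventually_gt_atTop ((m:ℝ) + x)).exists
  set nm : ℕ → ℕ := fun m => Nat.find (hex m) with hnm
  have hup : ∀ m : ℕ, (m:ℝ) + x < G (nm m + 1) := fun m => Nat.find_spec (hex m)
  have hlo : ∀ m, G (nm m) ≤ (m:ℝ) + x := by
    intro m
    rcases Nat.eq_zero_or_pos (nm m) with h | h
    · rw [h]; simp only [hG, Finset.range_zero, Finset.sum_empty]; positivity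
    · have := Nat.find_min (hex m) (show nm m - 1 < nm m by omega)
      push_neg at this
      calc G (nm m) = G ((nm m - 1) + 1) := by congr 1; omega
        _ ≤ (m:ℝ) + x := this
  -- each landing index is in the target set
  have hmem : ∀ m, nm m ∈
      {n : ℕ | KcCond V (prefixSeq α n) (Nat.bits n) + (f n : ℕ∞) < (n : ℕ∞)} := by
    intro m
    have hu := hup m
    have hl := hlo m
    set n := nm m with hn
    have hstep : G (n + 1) = G n + hp n := Finset.sum_range_succ _ _
    rw [hstep] at hu
    -- goodness
    have hgood : 2 * (f n + d) ≤ n := by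
      by_contra h
      have hz : hp n = 0 := by rw [hhp]; simp [h]
      rw [hz, add_zero] at hu
      linarith
    have hpn : hp n = ((2:ℝ)⁻¹) ^ (f n + d) := by rw [hhp]; simp [hgood]
    set N := 2 ^ (n + 1) with hN
    set a := aval α n with ha
    have hNr : ((N:ℕ):ℝ) = 2 ^ (n+1) := by rw [hN]; norm_cast
    have hNpos : (0:ℝ) < 2 ^ (n+1) := by positivity
    have hxup : (2:ℝ) ^ (n+1) * x ≤ (a:ℝ) + 1 := by
      have := xval_upper α n
      have h2 : (2:ℝ)^(n+1) * (((a:ℝ)+1) * ((2:ℝ)⁻¹)^(n+1)) = (a:ℝ) + 1 := by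
        rw [show (2:ℝ)^(n+1) * (((a:ℝ)+1) * ((2:ℝ)⁻¹)^(n+1))
            = ((2:ℝ)*(2:ℝ)⁻¹)^(n+1) * ((a:ℝ)+1) by rw [mul_pow]; ring]
        norm_num
      nlinarith
    have hxlo : (a:ℝ) ≤ (2:ℝ) ^ (n+1) * x := by
      have := xval_lower α n
      have h2 : (2:ℝ)^(n+1) * ((a:ℝ) * ((2:ℝ)⁻¹)^(n+1)) = (a:ℝ) := by
        rw [show (2:ℝ)^(n+1) * ((a:ℝ) * ((2:ℝ)⁻¹)^(n+1))
            = ((2:ℝ)*(2:ℝ)⁻¹)^(n+1) * (a:ℝ) by rw [mul_pow]; ring]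
        norm_num
      nlinarith
    have hTG : ((Tf f d n : ℕ) : ℝ) = 2 ^ (n+1) * G n := Tf_cast f d n
    have hpowcast : ((2 ^ (n + 1 - (f n + d)) : ℕ) : ℝ) = 2 ^ (n+1) * ((2:ℝ)⁻¹) ^ (f n + d) := by
      have hle : f n + d ≤ n + 1 := by omega
      push_cast
      rw [show (2:ℝ) ^ (n+1) = 2 ^ (n + 1 - (f n + d)) * 2 ^ (f n + d) from by
        rw [← pow_add]; congr 1; omega]
      rw [mul_assoc, show (2:ℝ) ^ (f n + d) * (2:ℝ)⁻¹ ^ (f n + d) = 1 from by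
        rw [← mul_pow]; norm_num]
      ring
    -- go to ℕ
    have hC2 : Tf f d n ≤ m * N + a + 1 := by
      have hr : ((Tf f d n : ℕ) : ℝ) ≤ ((m * N + a + 1 : ℕ) : ℝ) := by
        rw [hTG]
        push_cast
        have h1 : 2 ^ (n+1) * G n ≤ 2 ^ (n+1) * ((m:ℝ) + x) :=
          mul_le_mul_of_nonneg_left hl (le_of_lt hNpos)
        have h2 : (2:ℝ) ^ (n+1) * ((m:ℝ) + x) = (m:ℝ) * 2^(n+1) + 2^(n+1) * x := by ring
        rw [hN]; push_cast
        nlinarith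
      exact_mod_cast hr
    have hC3 : m * N + a < Tf f d n + 2 ^ (n + 1 - (f n + d)) := by
      have hr : ((m * N + a : ℕ) : ℝ) < ((Tf f d n + 2 ^ (n + 1 - (f n + d)) : ℕ) : ℝ) := by
        push_cast [hTG, hpowcast]
        have h1 : (2:ℝ) ^ (n+1) * ((m:ℝ) + x) < 2 ^ (n+1) * (G n + hp n) :=
          mul_lt_mul_of_pos_left hu hNpos
        rw [hpn] at h1
        rw [hN]; push_cast
        nlinarith
      exact_mod_cast hr
    -- machine bound
    have hmach := machine_hits f α d n m hgood (by rw [hN] at hC2; exact_mod_cast hC2)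
      (by rw [hN] at hC3; exact_mod_cast hC3)
    set L := n + 2 - (f n + d) with hL
    set p := encLE L (m * 2 ^ (n + 1) + aval α n + 1 - Tf f d n) with hP
    have hKB : KcCond (fun z => (machF f z : Part (List Bool)))
        (prefixSeq α n) (Nat.bits n) ≤ (L : ℕ∞) := by
      apply sInf_le
      exact ⟨p, Part.mem_some_iff.2 hmach.symm, by rw [hP, length_encLE]⟩
    have hKV := hc (prefixSeq α n) (Nat.bits n)
    have hKV2 : KcCond V (prefixSeq α n) (Nat.bits n) ≤ ((L + c : ℕ) : ℕ∞) := by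
      calc KcCond V (prefixSeq α n) (Nat.bits n)
          ≤ KcCond (fun z => (machF f z : Part (List Bool))) (prefixSeq α n) (Nat.bits n)
            + (c : ℕ∞) := hKV
        _ ≤ (L : ℕ∞) + (c : ℕ∞) := add_le_add_left hKB _
        _ = ((L + c : ℕ) : ℕ∞) := by push_cast; ring
    show KcCond V (prefixSeq α n) (Nat.bits n) + (f n : ℕ∞) < (n : ℕ∞)
    have harith : L + c + f n = n - 1 ∧ 1 ≤ n := by
      constructor <;> omega
    calc KcCond V (prefixSeq α n) (Nat.bits n) + (f n : ℕ∞)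
        ≤ ((L + c : ℕ) : ℕ∞) + (f n : ℕ∞) := add_le_add_left hKV2 _
      _ = ((L + c + f n : ℕ) : ℕ∞) := by push_cast; ring
      _ = ((n - 1 : ℕ) : ℕ∞) := by rw [harith.1]
      _ < (n : ℕ∞) := by
          have h1 := harith.2
          exact_mod_cast Nat.sub_lt (by omega) (by omega)
  -- injectivity
  have hinj : Function.Injective nm := by
    intro m1 m2 h
    by_contra hne
    have h1 : G (nm m1) ≤ (m1:ℝ) + x := hlo m1
    have h2 : (m2:ℝ) + x < G (nm m2 + 1) := hup m2
    have h3 : (m1:ℝ) + x < G (nm m1 + 1) := hup m1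
    have h4 : G (nm m2) ≤ (m2:ℝ) + x := hlo m2
    have hstep1 : G (nm m1 + 1) = G (nm m1) + hp (nm m1) := Finset.sum_range_succ _ _
    have hple := hp_le_one (nm m2)
    rw [h] at h1 h3 hstep1
    have hlt1 : (m1:ℝ) < (m2:ℝ) + 1 := by linarith
    have hlt2 : (m2:ℝ) < (m1:ℝ) + 1 := by linarith
    have : m1 < m2 + 1 := by exact_mod_cast hlt1
    have : m2 < m1 + 1 := by exact_mod_cast hlt2
    omega
  exact Set.infinite_of_injective_forall_mem hinj hmem

/-- **Large oscillations theorem** (Martin-Löf): if `f : ℕ → ℕ` is computable and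
`Σ_n 2^(−f(n)) = +∞`, then every infinite binary sequence `α = a₀a₁a₂…` has infinitely
many `n` with `K(a₀…aₙ | n) < n − f(n)` (stated as `K(a₀…aₙ | n) + f(n) < n`, with `n`
coded by its binary representation). In particular, taking `f` constant, no sequence
satisfies `K(a₀…aₙ | n) ≥ n − c` for all `n`. -/
theorem large_oscillations (V : List Bool × List Bool →. List Bool) (hV : OptimalCond V) :
    (∀ f : ℕ → ℕ, Computable f → ¬ Summable (fun n : ℕ => (2 : ℝ)⁻¹ ^ f n) →
      ∀ α : ℕ → Bool,
        {n : ℕ | KcCond V (prefixSeq α n) (Nat.bits n) + (f n : ℕ∞) < (n : ℕ∞)}.Infinite) ∧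
    (∀ α : ℕ → Bool, ¬ ∃ c : ℕ, ∀ n : ℕ,
        ((n - c : ℕ) : ℕ∞) ≤ KcCond V (prefixSeq α n) (Nat.bits n)) := by
  constructor
  · exact fun f hf hsum α => main_construction V hV f hf hsum α
  · rintro α ⟨c, hc⟩
    have hnsum : ¬ Summable (fun _ : ℕ => (2 : ℝ)⁻¹ ^ (c + 1)) := by
      intro h
      have h0 := h.tendsto_atTop_zero
      have h1 : ((2:ℝ)⁻¹ ^ (c+1)) = 0 := tendsto_nhds_unique tendsto_const_nhds h0
      have h2 : (0:ℝ) < (2:ℝ)⁻¹ ^ (c+1) := by positivity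
      linarith
    have hinf := main_construction V hV (fun _ => c + 1) (Computable.const _) hnsum α
    obtain ⟨n, hn, hcn⟩ := hinf.exists_gt c
    have hK := hc n
    have hadd : ((n - c : ℕ) : ℕ∞) + ((c + 1 : ℕ) : ℕ∞)
        ≤ KcCond V (prefixSeq α n) (Nat.bits n) + ((c + 1 : ℕ) : ℕ∞) :=
      add_le_add_left hK _
    have hmem : KcCond V (prefixSeq α n) (Nat.bits n) + ((c+1 : ℕ) : ℕ∞) < (n : ℕ∞) := by
      have := hn
      simpa using this
    have hfinal : ((n - c : ℕ) : ℕ∞) + ((c + 1 : ℕ) : ℕ∞) < (n : ℕ∞) := lt_of_le_of_lt hadd hmem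
    have : ((n - c + (c + 1) : ℕ) : ℕ∞) < (n : ℕ∞) := by push_cast at hfinal ⊢; exact hfinal
    have hlt : n - c + (c + 1) < n := by exact_mod_cast this
    omega
end
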